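/- arXiv:2311.05500 — 9 statements merged into one kernel-verified Lean document; each statement's English description precedes it below -/
import Mathlib

section
/- Let t, d be positive integers, q ∈ [0,1] a real, and v₁, …, v_t vectors in ℝ^d each with ℓ1-norm at most 1. Then there exists a subset I ⊆ {1,…,t} such that the ℓ∞-norm of (∑_{i∈I} vᵢ − q·∑_{i=1}^t vᵢ) is strictly less than 1. -/
open Finset

-- Kernel vector lemma
lemma bf_kernel {t d : ℕ} (v : Fin t → Fin d → ℝ) (F : Finset (Fin t)) (A : Finset (Fin d))
    (hcard : A.card < F.card) :
    ∃ y : Fin t → ℝ, y ≠ 0 ∧ (∀ i, i ∉ F → y i = 0) ∧ ∀ j ∈ A, ∑ i, y i * v i j = 0 := by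
  classical
  let φ : ({i // i ∈ F} → ℝ) →ₗ[ℝ] ({j // j ∈ A} → ℝ) :=
    { toFun := fun z j => ∑ i : {i // i ∈ F}, z i * v i j
      map_add' := by
        intro a b; funext j; simp [add_mul, Finset.sum_add_distrib]
      map_smul' := by
        intro c a; funext j; simp [Finset.mul_sum, mul_assoc] }
  have hninj : ¬ Function.Injective φ := by
    intro hinj
    have := LinearMap.finrank_le_finrank_of_injective hinj
    rw [Module.finrank_fintype_fun_eq_card, Module.finrank_fintype_fun_eq_card,
      Fintype.card_coe, Fintype.card_coe] at this
    omega
  rw [Function.not_injective_iff] at hninj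
  obtain ⟨a, b, hab, hne⟩ := hninj
  have hker : φ (a - b) = 0 := by rw [map_sub, hab, sub_self]
  refine ⟨fun i => if h : i ∈ F then (a - b) ⟨i, h⟩ else 0, ?_, ?_, ?_⟩
  · intro h0
    apply hne
    funext i
    have := congrFun h0 i.1
    simp only [i.2, dif_pos] at this
    have : (a - b) i = 0 := by simpa using this
    have := sub_eq_zero.mp (by simpa [Pi.sub_apply] using this)
    exact this
  · intro i hi; simp [hi]
  · intro j hj
    have h1 : ∑ i, (if h : i ∈ F then (a - b) ⟨i, h⟩ else 0) * v i j
        = ∑ i ∈ F, (if h : i ∈ F then (a - b) ⟨i, h⟩ else 0) * v i j := by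
      refine (Finset.sum_subset F.subset_univ ?_).symm
      intro i _ hi; simp [hi]
    rw [h1]
    have h2 : ∑ i ∈ F, (if h : i ∈ F then (a - b) ⟨i, h⟩ else 0) * v i j
        = ∑ i : {i // i ∈ F}, (a - b) i * v i.1 j := by
      rw [← Finset.sum_coe_sort]
      refine Finset.sum_congr rfl ?_
      intro i _; simp [i.2]
    rw [h2]
    exact congrFun hker ⟨j, hj⟩

lemma bf_round {t d : ℕ} (v : Fin t → Fin d → ℝ) (hv : ∀ i, ∑ j, |v i j| ≤ 1) :
    ∀ n : ℕ, ∀ x : Fin t → ℝ, (∀ i, 0 ≤ x i) → (∀ i, x i ≤ 1) →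
    (Finset.univ.filter fun i => x i ≠ 0 ∧ x i ≠ 1).card ≤ n →
    ∃ z : Fin t → ℝ, (∀ i, z i = 0 ∨ z i = 1) ∧
      (∀ i, (x i = 0 ∨ x i = 1) → z i = x i) ∧
      ∀ j, (∑ i, z i * v i j) = (∑ i, x i * v i j) ∨ |∑ i, (z i - x i) * v i j| < 1 := by
  classical
  intro n
  induction n with
  | zero =>
    intro x hx0 hx1 hcard
    have hF : ∀ i, x i = 0 ∨ x i = 1 := by
      intro i
      by_contra h
      push_neg at h
      have : i ∈ Finset.univ.filter fun i => x i ≠ 0 ∧ x i ≠ 1 := by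
        simp [h.1, h.2]
      have := Finset.card_pos.mpr ⟨i, this⟩
      omega
    exact ⟨x, hF, fun i _ => rfl, fun j => Or.inl rfl⟩
  | succ n ih =>
    intro x hx0 hx1 hcard
    set F := Finset.univ.filter fun i => x i ≠ 0 ∧ x i ≠ 1 with hFdef
    by_cases hFne : F.Nonempty
    swap
    · -- no fractional variables, done
      have hF : ∀ i, x i = 0 ∨ x i = 1 := by
        intro i
        by_contra h
        push_neg at h
        exact hFne ⟨i, by simp [hFdef, h.1, h.2]⟩
      exact ⟨x, hF, fun i _ => rfl, fun j => Or.inl rfl⟩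
    have hmemF : ∀ i ∈ F, 0 < x i ∧ x i < 1 := by
      intro i hi
      simp only [hFdef, Finset.mem_filter] at hi
      exact ⟨lt_of_le_of_ne (hx0 i) (Ne.symm hi.2.1), lt_of_le_of_ne (hx1 i) hi.2.2⟩
    have hnotF : ∀ i, i ∉ F → (x i = 0 ∨ x i = 1) := by
      intro i hi
      by_contra h
      push_neg at h
      exact hi (by simp [hFdef, h.1, h.2])
    set A := Finset.univ.filter (fun j => 1 < ∑ i ∈ F, |v i j|) with hAdef
    have hAcard : A.card < F.card := by
      have key : (A.card : ℝ) < F.card := by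
        rcases A.eq_empty_or_nonempty with h | hAne
        · simp only [h, Finset.card_empty, Nat.cast_zero, Nat.cast_pos]
          exact Finset.card_pos.mpr hFne
        · have h1 : (A.card : ℝ) = ∑ j ∈ A, (1:ℝ) := by simp
          have h2 : ∑ j ∈ A, (1:ℝ) < ∑ j ∈ A, ∑ i ∈ F, |v i j| :=
            Finset.sum_lt_sum_of_nonempty hAne (fun j hj => by
              simp only [hAdef, Finset.mem_filter] at hj; exact hj.2)
          have h3 : ∑ j ∈ A, ∑ i ∈ F, |v i j| ≤ ∑ j, ∑ i ∈ F, |v i j| :=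
            Finset.sum_le_sum_of_subset_of_nonneg A.subset_univ
              (fun j _ _ => Finset.sum_nonneg fun i _ => abs_nonneg _)
          have h4 : ∑ j, ∑ i ∈ F, |v i j| = ∑ i ∈ F, ∑ j, |v i j| := Finset.sum_comm
          have h5 : ∑ i ∈ F, ∑ j, |v i j| ≤ ∑ i ∈ F, (1:ℝ) := Finset.sum_le_sum (fun i _ => hv i)
          have h6 : ∑ i ∈ F, (1:ℝ) = F.card := by simp
          linarith
      exact_mod_cast key
    obtain ⟨y, hy0, hysupp, hyker⟩ := bf_kernel v F A hAcard
    -- choose the step size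
    set S := Finset.univ.filter (fun i => y i ≠ 0) with hSdef
    have hSne : S.Nonempty := by
      rcases Function.ne_iff.mp hy0 with ⟨i, hi⟩
      exact ⟨i, by simpa [hSdef] using hi⟩
    have hSF : ∀ i ∈ S, i ∈ F := by
      intro i hi
      by_contra h
      simp only [hSdef, Finset.mem_filter] at hi
      exact hi.2 (hysupp i h)
    set r : Fin t → ℝ := fun i => if 0 < y i then (1 - x i) / y i else x i / (-y i) with hrdef
    obtain ⟨i0, hi0S, hi0min⟩ := Finset.exists_min_image S r hSne
    set lam := r i0 with hlamdef
    have hrpos : ∀ i ∈ S, 0 < r i := by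
      intro i hi
      have hxF := hmemF i (hSF i hi)
      have hyi : y i ≠ 0 := by simpa [hSdef] using hi
      simp only [hrdef]
      split_ifs with h
      · exact div_pos (by linarith [hxF.2]) h
      · have : y i < 0 := lt_of_le_of_ne (le_of_not_gt h) hyi
        exact div_pos hxF.1 (by linarith)
    set x' : Fin t → ℝ := fun i => x i + lam * y i with hx'def
    have hx'eq : ∀ i, y i = 0 → x' i = x i := by
      intro i hi; simp [hx'def, hi]
    have hlam_pos : 0 < lam := hrpos i0 hi0S
    have hx'01 : ∀ i, 0 ≤ x' i ∧ x' i ≤ 1 := by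
      intro i
      by_cases hyi : y i = 0
      · rw [hx'eq i hyi]; exact ⟨hx0 i, hx1 i⟩
      · have hiS : i ∈ S := by simp [hSdef, hyi]
        have hxF := hmemF i (hSF i hiS)
        have hlam_le : lam ≤ r i := hi0min i hiS
        simp only [hx'def]
        rcases lt_or_gt_of_ne hyi with hneg | hpos
        · constructor
          · have hr : r i = x i / (-y i) := by simp [hrdef, not_lt_of_gt hneg]
            have hle : lam * (-y i) ≤ x i := by
              rw [hr] at hlam_le
              exact (le_div_iff₀ (by linarith)).mp hlam_le
            nlinarith
          · nlinarith [hxF.2]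
        · constructor
          · nlinarith [hxF.1]
          · have hr : r i = (1 - x i) / y i := by simp [hrdef, hpos]
            have hle : lam * y i ≤ 1 - x i := (le_div_iff₀ hpos).mp (hr ▸ hlam_le)
            linarith
    have hi0hit : x' i0 = 0 ∨ x' i0 = 1 := by
      have hyi0 : y i0 ≠ 0 := by simpa [hSdef] using hi0S
      by_cases hpos : 0 < y i0
      · right
        have h1 : (1 - x i0) / y i0 * y i0 = 1 - x i0 := div_mul_cancel₀ _ hyi0
        simp only [hx'def, hlamdef, hrdef, if_pos hpos]
        linarith
      · left
        have hne : -y i0 ≠ 0 := neg_ne_zero.mpr hyi0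
        have h1 : x i0 / (-y i0) * (-y i0) = x i0 := div_mul_cancel₀ _ hne
        simp only [hx'def, hlamdef, hrdef, if_neg hpos]
        nlinarith [h1]
    have hApres : ∀ j ∈ A, ∑ i, x' i * v i j = ∑ i, x i * v i j := by
      intro j hj
      have : ∑ i, x' i * v i j = ∑ i, x i * v i j + lam * ∑ i, y i * v i j := by
        rw [Finset.mul_sum, ← Finset.sum_add_distrib]
        refine Finset.sum_congr rfl fun i _ => by ring
      rw [this, hyker j hj, mul_zero, add_zero]
    have hcard' : (Finset.univ.filter fun i => x' i ≠ 0 ∧ x' i ≠ 1).card ≤ n := by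
      have hsub : (Finset.univ.filter fun i => x' i ≠ 0 ∧ x' i ≠ 1) ⊆ F.erase i0 := by
        intro i hi
        simp only [Finset.mem_filter, Finset.mem_univ, true_and] at hi
        rw [Finset.mem_erase]
        constructor
        · rintro rfl
          rcases hi0hit with h | h
          exacts [hi.1 h, hi.2 h]
        · by_contra h
          have hyi := hysupp i h
          rcases hnotF i h with h0 | h0 <;> rw [hx'eq i hyi] at hi
          exacts [hi.1 h0, hi.2 h0]
      have h1 := Finset.card_le_card hsub
      rw [Finset.card_erase_of_mem (hSF i0 hi0S)] at h1
      have h2 := Finset.card_pos.mpr hFne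
      omega
    obtain ⟨z, hz01, hzpres, hzdisj⟩ := ih x' (fun i => (hx'01 i).1) (fun i => (hx'01 i).2) hcard'
    have hzx : ∀ i, (x i = 0 ∨ x i = 1) → z i = x i := by
      intro i hi
      have hiF : i ∉ F := by
        simp only [hFdef, Finset.mem_filter]
        rintro ⟨-, h1, h2⟩
        rcases hi with h | h
        exacts [h1 h, h2 h]
      have := hx'eq i (hysupp i hiF)
      rw [hzpres i (this ▸ hi), this]
    refine ⟨z, hz01, hzx, ?_⟩
    intro j
    by_cases hj : j ∈ A
    · rcases hzdisj j with h | h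
      · exact Or.inl (h.trans (hApres j hj))
      · refine Or.inr ?_
        have heq : ∑ i, (z i - x i) * v i j = ∑ i, (z i - x' i) * v i j := by
          have h2 : ∑ i, (z i - x i) * v i j
              = ∑ i, (z i - x' i) * v i j + (∑ i, x' i * v i j - ∑ i, x i * v i j) := by
            rw [← Finset.sum_sub_distrib, ← Finset.sum_add_distrib]
            refine Finset.sum_congr rfl fun i _ => by ring
          rw [h2, hApres j hj, sub_self, add_zero]
        rw [heq]; exact h
    · -- inactive row: direct bound
      refine Or.inr ?_
      have hjle : ∑ i ∈ F, |v i j| ≤ 1 := by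
        have h := hj
        simp only [hAdef, Finset.mem_filter, Finset.mem_univ, true_and, not_lt] at h
        exact h
      have hsum : ∑ i, (z i - x i) * v i j = ∑ i ∈ F, (z i - x i) * v i j := by
        refine (Finset.sum_subset F.subset_univ ?_).symm
        intro i _ hi
        rw [hzx i (hnotF i hi), sub_self, zero_mul]
      have hc1 : ∀ i ∈ F, |z i - x i| < 1 := by
        intro i hi
        have hx := hmemF i hi
        rcases hz01 i with h | h <;> rw [h, abs_sub_lt_iff] <;>
          exact ⟨by linarith [hx.1, hx.2], by linarith [hx.1, hx.2]⟩
      have hclt : F.sup' hFne (fun i => |z i - x i|) < 1 :=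
        (Finset.sup'_lt_iff hFne).mpr hc1
      have hcge : (0:ℝ) ≤ F.sup' hFne (fun i => |z i - x i|) :=
        le_trans (abs_nonneg (z hFne.choose - x hFne.choose))
          (Finset.le_sup' (fun i => |z i - x i|) hFne.choose_spec)
      calc |∑ i, (z i - x i) * v i j| = |∑ i ∈ F, (z i - x i) * v i j| := by rw [hsum]
        _ ≤ ∑ i ∈ F, |(z i - x i) * v i j| := Finset.abs_sum_le_sum_abs _ _
        _ = ∑ i ∈ F, |z i - x i| * |v i j| := by simp [abs_mul]
        _ ≤ ∑ i ∈ F, F.sup' hFne (fun i => |z i - x i|) * |v i j| :=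
            Finset.sum_le_sum (fun i hi =>
              mul_le_mul_of_nonneg_right (Finset.le_sup' (fun i => |z i - x i|) hi) (abs_nonneg _))
        _ = F.sup' hFne (fun i => |z i - x i|) * ∑ i ∈ F, |v i j| := by rw [Finset.mul_sum]
        _ ≤ F.sup' hFne (fun i => |z i - x i|) * 1 := mul_le_mul_of_nonneg_left hjle hcge
        _ < 1 := by rwa [mul_one]

/-- Beck–Fiala type rounding: for vectors `v₁, …, v_t ∈ ℝ^d` of ℓ1-norm at most 1
and `q ∈ [0,1]`, some subset `I` of indices satisfies
`‖∑_{i∈I} vᵢ - q ∑ᵢ vᵢ‖_∞ < 1`. -/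
theorem beck_fiala_rounding (t d : ℕ) (ht : 0 < t) (hd : 0 < d)
    (q : ℝ) (hq0 : 0 ≤ q) (hq1 : q ≤ 1)
    (v : Fin t → Fin d → ℝ) (hv : ∀ i, ∑ j, |v i j| ≤ 1) :
    ∃ I : Finset (Fin t),
      ∀ j : Fin d, |(∑ i ∈ I, v i j) - q * ∑ i, v i j| < 1 := by
  classical
  obtain ⟨z, hz01, -, hzdisj⟩ := bf_round v hv t (fun _ => q) (fun _ => hq0) (fun _ => hq1)
    (le_trans (Finset.card_le_univ _) (by simp))
  refine ⟨Finset.univ.filter (fun i => z i = 1), fun j => ?_⟩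
  have hIsum : ∑ i ∈ Finset.univ.filter (fun i => z i = 1), v i j = ∑ i, z i * v i j := by
    rw [Finset.sum_filter]
    refine Finset.sum_congr rfl fun i _ => ?_
    rcases hz01 i with h | h <;> simp [h]
  have hqsum : ∑ i, q * v i j = q * ∑ i, v i j := by rw [Finset.mul_sum]
  rcases hzdisj j with h | h
  · rw [hIsum, h, hqsum, sub_self, abs_zero]
    exact one_pos
  · have : ∑ i, (z i - q) * v i j = (∑ i ∈ Finset.univ.filter (fun i => z i = 1), v i j)
        - q * ∑ i, v i j := by
      rw [hIsum, ← hqsum, ← Finset.sum_sub_distrib]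
      exact Finset.sum_congr rfl fun i _ => by ring
    rwa [this] at h
end

section
/- Let t, d, k be positive integers and m = 2^k. Let v₁, …, v_t be vectors in ℝ^d each with ℓ1-norm at most 1. Then there exists a partition of {1,…,t} into pairwise disjoint sets I₁, …, I_m such that for every p ∈ [m], the ℓ∞-norm of (∑_{i∈I_p} vᵢ − (1/m)·∑_{i=1}^t vᵢ) is at most ∑_{i=0}^{k−1} 2^{−i}, which is strictly less than 2. -/
/-!
Beck–Fiala rounding. Start from a point `x ∈ [0, 1]^t` and call a coordinate floating if it
lies in `(0, 1)`. Call a row heavy if its ℓ1-mass on the floating coordinates exceeds `1`; since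
every column has mass at most `1`, there are fewer heavy rows than floating coordinates, so some
nonzero direction supported on the floating coordinates is orthogonal to all heavy rows. Moving
along it until a coordinate reaches `{0, 1}` leaves heavy rows unchanged and fixes one more
coordinate. A row that is not heavy can change by at most its floating mass, at most `1`, during
all remaining steps. Rounding `x = 1/2` on a set `T` halves `T` with ℓ∞-error `1`, and halving
every part of a partition `k` times gives the errors `e₀ = 0`, `e_{k+1} = 1 + e_k / 2`.
-/

open Finset

namespace BeckFiala

variable {ι κ P Q : Type*}

noncomputable def floating [Fintype ι] (x : ι → ℝ) : Finset ι :=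
  {i | x i ∈ Set.Ioo 0 1}

lemma mem_floating [Fintype ι] {x : ι → ℝ} {i : ι} :
    i ∈ floating x ↔ x i ∈ Set.Ioo 0 1 := by
  simp [floating]

lemma eq_zero_or_eq_one_of_notMem_floating [Fintype ι] {x : ι → ℝ} {i : ι}
    (hx : x i ∈ Set.Icc 0 1) (hi : i ∉ floating x) : x i = 0 ∨ x i = 1 := by
  rw [mem_floating, Set.mem_Ioo] at hi
  rcases hx with ⟨h0, h1⟩
  by_contra! h
  exact hi ⟨lt_of_le_of_ne h0 h.1.symm, lt_of_le_of_ne h1 h.2⟩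

lemma notMem_floating_of_eq_zero_or_eq_one [Fintype ι] {x : ι → ℝ} {i : ι}
    (hi : x i = 0 ∨ x i = 1) : i ∉ floating x := by
  rcases hi with hi | hi <;> simp [mem_floating, hi]

/-- The largest `c` with `x + c * u ∈ [0, 1]`, for `x ∈ [0, 1]` and `u ≠ 0`; junk value `0` if
`u = 0`. -/
noncomputable def hitTime (x u : ℝ) : ℝ :=
  if 0 < u then (1 - x) / u else -x / u

lemma hitTime_nonneg {x : ℝ} (hx : x ∈ Set.Icc 0 1) (u : ℝ) : 0 ≤ hitTime x u := by
  rcases hx with ⟨h0, h1⟩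
  unfold hitTime
  split_ifs with hu
  · exact div_nonneg (by linarith) hu.le
  · exact div_nonneg_of_nonpos (by linarith) (not_lt.mp hu)

lemma add_mul_mem_Icc_of_le_hitTime {x u c : ℝ} (hx : x ∈ Set.Icc 0 1) (hc0 : 0 ≤ c)
    (hc : c ≤ hitTime x u) : x + c * u ∈ Set.Icc 0 1 := by
  rcases hx with ⟨h0, h1⟩
  unfold hitTime at hc
  rcases lt_trichotomy u 0 with hu | rfl | hu
  · rw [if_neg hu.not_gt, le_div_iff_of_neg hu] at hc
    constructor <;> nlinarith
  · simpa using And.intro h0 h1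
  · rw [if_pos hu, le_div_iff₀ hu] at hc
    constructor <;> nlinarith

lemma add_hitTime_mul_eq_zero_or_eq_one (x : ℝ) {u : ℝ} (hu : u ≠ 0) :
    x + hitTime x u * u = 0 ∨ x + hitTime x u * u = 1 := by
  unfold hitTime
  split_ifs
  · right; rw [div_mul_cancel₀ _ hu]; ring
  · left; rw [div_mul_cancel₀ _ hu]; ring

lemma exists_add_smul_mem_Icc_and_eq_zero_or_eq_one [Fintype ι] {x u : ι → ℝ}
    (hx : ∀ i, x i ∈ Set.Icc 0 1) (hu : u ≠ 0) :
    ∃ c : ℝ, (∀ i, (x + c • u) i ∈ Set.Icc 0 1) ∧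
      ∃ i, u i ≠ 0 ∧ ((x + c • u) i = 0 ∨ (x + c • u) i = 1) := by
  classical
  have hsupp : ({i | u i ≠ 0} : Finset ι).Nonempty := by
    obtain ⟨i, hi⟩ := Function.ne_iff.mp hu
    exact ⟨i, by simpa using hi⟩
  obtain ⟨i₀, hi₀, hmin⟩ := exists_min_image _ (fun i => hitTime (x i) (u i)) hsupp
  rw [mem_filter_univ] at hi₀
  refine ⟨hitTime (x i₀) (u i₀), fun i => ?_, i₀, hi₀,
    add_hitTime_mul_eq_zero_or_eq_one (x i₀) hi₀⟩
  by_cases hi : u i = 0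
  · simpa [hi] using hx i
  · exact add_mul_mem_Icc_of_le_hitTime (hx i) (hitTime_nonneg (hx i₀) _)
      (hmin i (by simpa using hi))

lemma exists_floating_add_smul_ssubset [Fintype ι] {x u : ι → ℝ}
    (hx : ∀ i, x i ∈ Set.Icc 0 1) (hu : u ≠ 0) (hsupp : ∀ i ∉ floating x, u i = 0) :
    ∃ c : ℝ, (∀ i, (x + c • u) i ∈ Set.Icc 0 1) ∧ floating (x + c • u) ⊂ floating x := by
  obtain ⟨c, hmem, i₀, hi₀, hbdry⟩ := exists_add_smul_mem_Icc_and_eq_zero_or_eq_one hx hu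
  have hsub : floating (x + c • u) ⊆ floating x := by
    intro i hi
    by_contra hix
    simp only [mem_floating, Pi.add_apply, Pi.smul_apply, hsupp i hix, smul_zero,
      add_zero] at hi
    exact hix (mem_floating.mpr hi)
  refine ⟨c, hmem, (ssubset_iff_of_subset hsub).mpr ⟨i₀, ?_, ?_⟩⟩
  · by_contra h
    exact hi₀ (hsupp i₀ h)
  · exact notMem_floating_of_eq_zero_or_eq_one hbdry

lemma exists_ne_zero_sum_mul_eq_zero [Fintype ι] (w : ι → κ → ℝ)
    {A : Finset ι} {B : Finset κ} (hBA : #B < #A) :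
    ∃ u : ι → ℝ, u ≠ 0 ∧ (∀ i ∉ A, u i = 0) ∧ ∀ j ∈ B, ∑ i, u i * w i j = 0 := by
  classical
  have hdep : ¬ LinearIndepOn ℝ (fun i (j : B) => w i j) (A : Set ι) := by
    intro h
    have := h.fintype_card_le_finrank
    simp only [coe_sort_coe, Fintype.card_coe, Module.finrank_fintype_fun_eq_card] at this
    omega
  rw [linearIndepOn_finset_iff] at hdep
  push Not at hdep
  obtain ⟨f, hf, i₀, hi₀, hfi₀⟩ := hdep
  refine ⟨fun i => if i ∈ A then f i else 0, Function.ne_iff.mpr ⟨i₀, by simpa [hi₀]⟩,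
    fun i hi => by simp [hi], fun j hj => ?_⟩
  have := congrFun hf ⟨j, hj⟩
  simp only [Finset.sum_apply, Pi.smul_apply, smul_eq_mul, Pi.zero_apply] at this
  simpa [ite_mul, sum_ite_mem] using this

lemma card_lt_card_of_sum_abs_le_one [Fintype κ] {v : ι → κ → ℝ}
    (hv : ∀ i, ∑ j, |v i j| ≤ 1) {A : Finset ι} (hA : A.Nonempty) :
    #({j | 1 < ∑ i ∈ A, |v i j|} : Finset κ) < #A := by
  set B : Finset κ := {j | 1 < ∑ i ∈ A, |v i j|}
  rcases B.eq_empty_or_nonempty with hB | hB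
  · rw [hB, card_empty]
    exact hA.card_pos
  have hmass : ∑ j, ∑ i ∈ A, |v i j| ≤ #A := by
    rw [sum_comm]
    simpa using sum_le_sum fun i (_ : i ∈ A) => hv i
  suffices (#B : ℝ) < #A by exact_mod_cast this
  calc (#B : ℝ) = ∑ _j ∈ B, (1 : ℝ) := by simp
    _ < ∑ j ∈ B, ∑ i ∈ A, |v i j| := sum_lt_sum_of_nonempty hB fun j hj => by simpa [B] using hj
    _ ≤ ∑ j, ∑ i ∈ A, |v i j| := sum_le_sum_of_subset_of_nonneg (subset_univ B)
      fun _ _ _ => sum_nonneg fun _ _ => abs_nonneg _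
    _ ≤ #A := hmass

lemma abs_sum_sub_mul_le_sum_abs [Fintype ι] {x z : ι → ℝ} {A : Finset ι}
    (hx : ∀ i, x i ∈ Set.Icc 0 1) (hz : ∀ i, z i ∈ Set.Icc 0 1) (hzx : ∀ i ∉ A, z i = x i)
    (w : ι → ℝ) : |∑ i, (z i - x i) * w i| ≤ ∑ i ∈ A, |w i| := by
  calc |∑ i, (z i - x i) * w i| ≤ ∑ i, |(z i - x i) * w i| := abs_sum_le_sum_abs _ _
    _ = ∑ i ∈ A, |(z i - x i) * w i| :=
      (sum_subset (subset_univ A) fun i _ hi => by simp [hzx i hi]).symm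
    _ ≤ ∑ i ∈ A, |w i| := by
      refine sum_le_sum fun i _ => ?_
      rw [abs_mul]
      refine mul_le_of_le_one_left (abs_nonneg _) (abs_sub_le_iff.mpr ⟨?_, ?_⟩)
      · linarith [(hz i).2, (hx i).1]
      · linarith [(hx i).2, (hz i).1]

theorem exists_rounding [Fintype ι] [Fintype κ] (v : ι → κ → ℝ)
    (hv : ∀ i, ∑ j, |v i j| ≤ 1) (x : ι → ℝ) (hx : ∀ i, x i ∈ Set.Icc 0 1) :
    ∃ z : ι → ℝ, (∀ i, z i = 0 ∨ z i = 1) ∧ (∀ i ∉ floating x, z i = x i) ∧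
      ∀ j, |∑ i, (z i - x i) * v i j| ≤ 1 := by
  rcases (floating x).eq_empty_or_nonempty with hA | hA
  · refine ⟨x, fun i => eq_zero_or_eq_one_of_notMem_floating (hx i) (by simp [hA]),
      fun _ _ => rfl, fun j => by simp⟩
  set heavy : Finset κ := {j | 1 < ∑ i ∈ floating x, |v i j|}
  obtain ⟨u, hu, hsupp, hker⟩ :=
    exists_ne_zero_sum_mul_eq_zero v (card_lt_card_of_sum_abs_le_one hv hA)
  obtain ⟨c, hx', hss⟩ := exists_floating_add_smul_ssubset hx hu hsupp
  obtain ⟨z, hz01, hzx', hzb⟩ := exists_rounding v hv (x + c • u) hx'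
  have hzx : ∀ i ∉ floating x, z i = x i := fun i hi => by
    rw [hzx' i fun h => hi (hss.subset h)]
    simp [hsupp i hi]
  refine ⟨z, hz01, hzx, fun j => ?_⟩
  by_cases hj : j ∈ heavy
  · have hshift : ∑ i, (z i - x i) * v i j
        = ∑ i, (z i - (x + c • u) i) * v i j + c * ∑ i, u i * v i j := by
      rw [mul_sum, ← sum_add_distrib]
      exact sum_congr rfl fun i _ => by simp only [Pi.add_apply, Pi.smul_apply, smul_eq_mul]; ring
    rw [hshift, hker j hj, mul_zero, add_zero]
    exact hzb j
  · have hz : ∀ i, z i ∈ Set.Icc 0 1 := fun i => by rcases hz01 i with h | h <;> simp [h]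
    exact (abs_sum_sub_mul_le_sum_abs hx hz hzx _).trans (by simpa [heavy] using hj)
termination_by #(floating x)
decreasing_by exact card_lt_card hss

theorem exists_subset_abs_sum_sub_mul_sum_le_one [Fintype ι] [Fintype κ]
    (v : ι → κ → ℝ) (hv : ∀ i, ∑ j, |v i j| ≤ 1) (T : Finset ι) {q : ℝ}
    (hq : q ∈ Set.Icc 0 1) :
    ∃ S ⊆ T, ∀ j, |∑ i ∈ S, v i j - q * ∑ i ∈ T, v i j| ≤ 1 := by
  classical
  set x : ι → ℝ := fun i => if i ∈ T then q else 0
  have hx : ∀ i, x i ∈ Set.Icc 0 1 := fun i => by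
    by_cases hi : i ∈ T <;> simp [x, hi, hq]
  obtain ⟨z, hz01, hzx, hzb⟩ := exists_rounding v hv x hx
  set S : Finset ι := {i | z i = 1}
  have hz : ∀ i, z i = if i ∈ S then 1 else 0 := fun i => by
    rcases hz01 i with h | h <;> simp [S, h]
  have hST : S ⊆ T := fun i hi => by
    by_contra hiT
    have hxi : x i = 0 := by simp [x, hiT]
    have := hzx i (notMem_floating_of_eq_zero_or_eq_one (Or.inl hxi))
    simp [S, this, hxi] at hi
  refine ⟨S, hST, fun j => ?_⟩
  convert hzb j using 2
  simp only [sub_mul, sum_sub_distrib, hz, x, ite_mul, one_mul, zero_mul, sum_ite_mem,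
    univ_inter, mul_sum]

def IsBalancedPartition [Fintype ι] [Fintype P] (v : ι → κ → ℝ)
    (I : P → Finset ι) (ε : ℝ) : Prop :=
  (∀ i, ∃! p, i ∈ I p) ∧
    ∀ p j, |∑ i ∈ I p, v i j - (1 / (Fintype.card P : ℝ)) * ∑ i, v i j| ≤ ε

lemma IsBalancedPartition.comp_equiv [Fintype ι] [Fintype P] [Fintype Q]
    {v : ι → κ → ℝ} {I : P → Finset ι} {ε : ℝ} (hI : IsBalancedPartition v I ε) (e : Q ≃ P) :
    IsBalancedPartition v (I ∘ e) ε := by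
  refine ⟨fun i => (e.existsUnique_congr_left (p := fun q => i ∈ I (e q))).mpr
    (by simpa using hI.1 i), fun q j => ?_⟩
  simpa [Fintype.card_congr e] using hI.2 (e q) j

lemma existsUnique_mem_split [DecidableEq ι] {I S : P → Finset ι}
    (hI : ∀ i, ∃! p, i ∈ I p) (hS : ∀ p, S p ⊆ I p) (i : ι) :
    ∃! pb : P × Bool, i ∈ if pb.2 then S pb.1 else I pb.1 \ S pb.1 := by
  obtain ⟨p, hp, huniq⟩ := hI i
  refine ⟨(p, decide (i ∈ S p)), by by_cases h : i ∈ S p <;> simp [h, hp], ?_⟩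
  rintro ⟨p', b⟩ hmem
  have hp' : i ∈ I p' := by
    split_ifs at hmem
    · exact hS p' hmem
    · exact (mem_sdiff.mp hmem).1
  obtain rfl := huniq p' hp'
  cases b <;> simp_all

theorem IsBalancedPartition.exists_halve [Fintype ι] [Fintype κ] [Fintype P]
    {v : ι → κ → ℝ} (hv : ∀ i, ∑ j, |v i j| ≤ 1) {I : P → Finset ι} {ε : ℝ}
    (hI : IsBalancedPartition v I ε) :
    ∃ J : P × Bool → Finset ι, IsBalancedPartition v J (1 + ε / 2) := by
  classical
  choose S hSI hS using fun p => exists_subset_abs_sum_sub_mul_sum_le_one v hv (I p)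
    (q := 1 / 2) ⟨by norm_num, by norm_num⟩
  refine ⟨fun pb => if pb.2 then S pb.1 else I pb.1 \ S pb.1,
    existsUnique_mem_split hI.1 hSI, fun ⟨p, b⟩ j => ?_⟩
  have hhalf :
      |∑ i ∈ (if b then S p else I p \ S p), v i j - 1 / 2 * ∑ i ∈ I p, v i j| ≤ 1 := by
    cases b
    · rw [if_neg Bool.false_ne_true, sum_sdiff_eq_sub (hSI p), ← abs_neg]
      convert hS p j using 2
      ring
    · exact hS p j
  have hcard : (1 / (Fintype.card (P × Bool) : ℝ)) = 1 / 2 * (1 / Fintype.card P) := by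
    simp [Fintype.card_prod, mul_comm]
  calc _ = |(∑ i ∈ (if b then S p else I p \ S p), v i j - 1 / 2 * ∑ i ∈ I p, v i j)
        + 1 / 2 * (∑ i ∈ I p, v i j - 1 / Fintype.card P * ∑ i, v i j)| := by
        rw [hcard]; ring_nf
    _ ≤ 1 + ε / 2 := by
      refine (abs_add_le _ _).trans (add_le_add hhalf ?_)
      rw [abs_mul, abs_of_pos one_half_pos]
      linarith [hI.2 p j]

theorem exists_isBalancedPartition_fin_two_pow [Fintype ι] [Fintype κ]
    {v : ι → κ → ℝ} (hv : ∀ i, ∑ j, |v i j| ≤ 1) (k : ℕ) :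
    ∃ I : Fin (2 ^ k) → Finset ι, IsBalancedPartition v I (∑ i ∈ range k, (2⁻¹ : ℝ) ^ i) := by
  induction k with
  | zero => exact ⟨fun _ => univ, fun i => ⟨0, mem_univ i, fun p _ => Fin.ext (by simp)⟩,
      fun p j => by simp⟩
  | succ k ih =>
    obtain ⟨I, hI⟩ := ih
    obtain ⟨J, hJ⟩ := hI.exists_halve hv
    have e : Fin (2 ^ (k + 1)) ≃ Fin (2 ^ k) × Bool := Fintype.equivOfCardEq (by simp [pow_succ])
    refine ⟨J ∘ e, ?_⟩
    rw [geom_sum_succ]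
    convert hJ.comp_equiv e using 1
    ring

end BeckFiala

theorem iterated_beck_fiala_general (t d k : ℕ)
    (v : Fin t → Fin d → ℝ) (hv : ∀ i, ∑ j, |v i j| ≤ 1) :
    ∃ I : Fin (2 ^ k) → Finset (Fin t),
      (∀ i : Fin t, ∃! p : Fin (2 ^ k), i ∈ I p) ∧
      (∀ (p : Fin (2 ^ k)) (j : Fin d),
        |(∑ i ∈ I p, v i j) - (1 / (2 ^ k : ℝ)) * ∑ i, v i j|
          ≤ ∑ i ∈ Finset.range k, (2 : ℝ) ^ (-(i : ℤ))) ∧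
      (∑ i ∈ Finset.range k, (2 : ℝ) ^ (-(i : ℤ))) < 2 := by
  have herr : ∑ i ∈ range k, (2 : ℝ) ^ (-(i : ℤ)) = ∑ i ∈ range k, (2⁻¹ : ℝ) ^ i := by
    simp [zpow_neg, inv_pow]
  obtain ⟨I, hpart, hbound⟩ := BeckFiala.exists_isBalancedPartition_fin_two_pow hv k
  refine ⟨I, hpart, fun p j => ?_, ?_⟩
  · simpa [herr] using hbound p j
  · rw [herr, geom_sum_eq (by norm_num), div_lt_iff_of_neg (by norm_num)]
    linarith [pow_pos (inv_pos.mpr two_pos : (0 : ℝ) < 2⁻¹) k]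

/-- Iterated Beck–Fiala rounding: vectors of ℓ1-norm at most 1 can be partitioned
into `m = 2^k` classes, each of which captures a `1/m` fraction of the total sum
up to ℓ∞-error `∑_{i=0}^{k-1} 2^{-i} < 2`. -/
theorem iterated_beck_fiala (t d k : ℕ) (ht : 0 < t) (hd : 0 < d) (hk : 0 < k)
    (v : Fin t → Fin d → ℝ) (hv : ∀ i, ∑ j, |v i j| ≤ 1) :
    ∃ I : Fin (2 ^ k) → Finset (Fin t),
      (∀ i : Fin t, ∃! p : Fin (2 ^ k), i ∈ I p) ∧
      (∀ (p : Fin (2 ^ k)) (j : Fin d),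
        |(∑ i ∈ I p, v i j) - (1 / (2 ^ k : ℝ)) * ∑ i, v i j|
          ≤ ∑ i ∈ Finset.range k, (2 : ℝ) ^ (-(i : ℤ))) ∧
      (∑ i ∈ Finset.range k, (2 : ℝ) ^ (-(i : ℤ))) < 2 :=
  iterated_beck_fiala_general t d k v hv
end

section
/- Let H be a connected unicyclic graph. Then there exists a tree T on the same vertex set V(H) such that Δ(T) ≤ Δ(H) and every edge of H is an edge of T², the square of T. -/
/-!
Let `v₀ v₁ ⋯ vℓ` be the cycle of `H`, and let `T` be `H` with the edges of this cycle replaced by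
the zigzag path `v₀, vℓ, v₁, vℓ₋₁, v₂, …`. Consecutive cycle vertices are at most two steps apart
on the zigzag path, so every edge of `H` lies in `T²`; in particular `T` is connected. Each cycle
vertex loses its two cycle edges and gains at most two path edges, so no degree grows. The cycle
has `ℓ + 1` edges and the path `ℓ`, so `T` has `|V| - 1` edges and is a tree.
-/

open Set

namespace SimpleGraph

variable {V : Type*}

section Square

variable {T T' G : SimpleGraph V} {a b c : V}

def square (T : SimpleGraph V) : SimpleGraph V :=
  fromRel fun a b => T.Adj a b ∨ ∃ c, T.Adj a c ∧ T.Adj c b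

theorem square_adj :
    T.square.Adj a b ↔ a ≠ b ∧ (T.Adj a b ∨ ∃ c, T.Adj a c ∧ T.Adj c b) := by
  refine ⟨fun ⟨hne, h⟩ => ⟨hne, ?_⟩, fun ⟨hne, h⟩ => ⟨hne, Or.inl h⟩⟩
  rcases h with h | h | ⟨c, hac, hcb⟩
  · exact h
  · exact Or.inl h.symm
  · exact Or.inr ⟨c, hcb.symm, hac.symm⟩

theorem le_square (T : SimpleGraph V) : T ≤ T.square :=
  fun _ _ h => square_adj.2 ⟨h.ne, Or.inl h⟩

theorem square_adj_of_adj_of_adj (hac : T.Adj a c) (hcb : T.Adj c b) (hne : a ≠ b) :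
    T.square.Adj a b :=
  square_adj.2 ⟨hne, Or.inr ⟨c, hac, hcb⟩⟩

theorem square_mono (h : T ≤ T') : T.square ≤ T'.square := by
  intro a b hab
  obtain ⟨hne, hab | ⟨c, hac, hcb⟩⟩ := square_adj.1 hab
  · exact le_square _ (h hab)
  · exact square_adj_of_adj_of_adj (h hac) (h hcb) hne

theorem Adj.reachable_of_square (h : T.square.Adj a b) : T.Reachable a b := by
  obtain ⟨-, hab | ⟨c, hac, hcb⟩⟩ := square_adj.1 h
  · exact hab.reachable
  · exact hac.reachable.trans hcb.reachable

theorem Connected.of_le_square (hG : G.Connected) (h : G ≤ T.square) : T.Connected := by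
  have := hG.nonempty
  refine Connected.mk fun a b => (reachable_iff_reflTransGen a b).2 ?_
  exact ((reachable_iff_reflTransGen a b).1 (hG.preconnected a b)).lift' id
    fun x y hxy => (reachable_iff_reflTransGen x y).1 (h hxy).reachable_of_square

end Square

section PathAlong

variable {σ : ℕ → V} {m j j' : ℕ}

def pathAlong (σ : ℕ → V) (m : ℕ) : SimpleGraph V :=
  fromRel fun a b => ∃ j < m, a = σ j ∧ b = σ (j + 1)

theorem pathAlong_adj_succ (hj : j < m) (hne : σ j ≠ σ (j + 1)) :
    (pathAlong σ m).Adj (σ j) (σ (j + 1)) :=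
  ⟨hne, Or.inl ⟨j, hj, rfl, rfl⟩⟩

theorem exists_eq_of_pathAlong_adj {a b : V} (h : (pathAlong σ m).Adj a b) :
    ∃ j ≤ m, σ j = a := by
  obtain ⟨-, ⟨j, hj, rfl, -⟩ | ⟨j, hj, -, rfl⟩⟩ := h
  exacts [⟨j, hj.le, rfl⟩, ⟨j + 1, hj, rfl⟩]

theorem neighborSet_pathAlong_subset (hσ : InjOn σ (Iic m)) (hj : j ≤ m) :
    (pathAlong σ m).neighborSet (σ j) ⊆ {σ (j - 1), σ (j + 1)} := by
  rintro b ⟨-, ⟨k, hk, hjk, rfl⟩ | ⟨k, hk, rfl, hjk⟩⟩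
  · obtain rfl : j = k := hσ (mem_Iic.2 hj) (mem_Iic.2 hk.le) hjk
    exact Or.inr rfl
  · obtain rfl : j = k + 1 := hσ (mem_Iic.2 hj) (mem_Iic.2 hk) hjk
    exact Or.inl rfl

theorem ncard_neighborSet_pathAlong_le (hσ : InjOn σ (Iic m)) (w : V) :
    ((pathAlong σ m).neighborSet w).ncard ≤ 2 := by
  by_cases hw : ∃ j ≤ m, σ j = w
  · obtain ⟨j, hj, rfl⟩ := hw
    calc _ ≤ ({σ (j - 1), σ (j + 1)} : Set V).ncard :=
          ncard_le_ncard (neighborSet_pathAlong_subset hσ hj)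
      _ ≤ ({σ (j + 1)} : Set V).ncard + 1 := ncard_insert_le _ _
      _ = 2 := by rw [ncard_singleton]
  · have : (pathAlong σ m).neighborSet w = ∅ :=
      eq_empty_of_forall_notMem fun b hb => hw (exists_eq_of_pathAlong_adj hb)
    simp [this]

theorem ncard_edgeSet_pathAlong_le : (pathAlong σ m).edgeSet.ncard ≤ m := by
  have hsub : (pathAlong σ m).edgeSet ⊆ (fun j => s(σ j, σ (j + 1))) '' Iio m := by
    rintro ⟨a, b⟩ ⟨-, ⟨j, hj, rfl, rfl⟩ | ⟨j, hj, rfl, rfl⟩⟩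
    exacts [⟨j, hj, rfl⟩, ⟨j, hj, Sym2.eq_swap⟩]
  calc _ ≤ ((fun j => s(σ j, σ (j + 1))) '' Iio m).ncard :=
        ncard_le_ncard hsub ((finite_Iio m).image _)
    _ ≤ (Iio m).ncard := ncard_image_le (finite_Iio m)
    _ = m := ncard_Iio_nat m

theorem square_pathAlong_adj (hσ : InjOn σ (Iic m)) (hj : j ≤ m) (hj' : j' ≤ m)
    (hne : j ≠ j') (h : j' ≤ j + 2) (h' : j ≤ j' + 2) :
    (pathAlong σ m).square.Adj (σ j) (σ j') := by
  wlog hlt : j < j' generalizing j j'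
  · exact (this hj' hj hne.symm h' h (by omega)).symm
  have hinj : ∀ {k k'}, k ≤ m → k' ≤ m → k ≠ k' → σ k ≠ σ k' :=
    fun hk hk' hne heq => hne (hσ (mem_Iic.2 hk) (mem_Iic.2 hk') heq)
  obtain rfl | rfl : j' = j + 1 ∨ j' = j + 2 := by omega
  · exact le_square _ (pathAlong_adj_succ (by omega) (hinj hj hj' hne))
  · exact square_adj_of_adj_of_adj
      (pathAlong_adj_succ (by omega) (hinj hj (by omega) (by omega)))
      (pathAlong_adj_succ (by omega) (hinj (by omega) hj' (by omega))) (hinj hj hj' hne)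

end PathAlong

section Zigzag

variable {ℓ i j : ℕ}

/-- The order `0, ℓ, 1, ℓ - 1, 2, …` in which the zigzag path visits `0, …, ℓ`. -/
def zigzag (ℓ j : ℕ) : ℕ := if j % 2 = 0 then j / 2 else ℓ - j / 2

/-- The inverse of `zigzag ℓ` on `{0, …, ℓ}`. -/
def zigzagIndex (ℓ i : ℕ) : ℕ := if 2 * i ≤ ℓ then 2 * i else 2 * (ℓ - i) + 1

theorem zigzag_le (h : j ≤ ℓ) : zigzag ℓ j ≤ ℓ := by
  unfold zigzag; split_ifs <;> omega

theorem zigzag_injOn : InjOn (zigzag ℓ) (Iic ℓ) := by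
  intro i hi j hj h
  simp only [zigzag, mem_Iic] at h hi hj
  split_ifs at h <;> omega

theorem zigzagIndex_le (h : i ≤ ℓ) : zigzagIndex ℓ i ≤ ℓ := by
  unfold zigzagIndex; split_ifs <;> omega

theorem zigzag_zigzagIndex (h : i ≤ ℓ) : zigzag ℓ (zigzagIndex ℓ i) = i := by
  unfold zigzag zigzagIndex; split_ifs <;> omega

theorem zigzagIndex_succ_le : zigzagIndex ℓ (i + 1) ≤ zigzagIndex ℓ i + 2 := by
  unfold zigzagIndex; split_ifs <;> omega

theorem zigzagIndex_le_succ : zigzagIndex ℓ i ≤ zigzagIndex ℓ (i + 1) + 2 := by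
  unfold zigzagIndex; split_ifs <;> omega

end Zigzag

section EdgeSwap

variable {G C Z : SimpleGraph V}

theorem ncard_neighborSet_sdiff_sup_le (hC : C ≤ G) {w : V} (hG : (G.neighborSet w).Finite)
    (hZ : (Z.neighborSet w).ncard ≤ (C.neighborSet w).ncard) :
    ((G \ C ⊔ Z).neighborSet w).ncard ≤ (G.neighborSet w).ncard := by
  have hsplit : (G.neighborSet w \ C.neighborSet w).ncard + (C.neighborSet w).ncard =
      (G.neighborSet w).ncard := ncard_sdiff_add_ncard_of_subset (fun _ hb => hC hb) hG
  calc _ ≤ (G.neighborSet w \ C.neighborSet w).ncard + (Z.neighborSet w).ncard :=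
        ncard_union_le _ _
    _ ≤ _ := by omega

theorem ncard_edgeSet_sdiff_sup_add_le (hC : C ≤ G) (hG : G.edgeSet.Finite) :
    (G \ C ⊔ Z).edgeSet.ncard + C.edgeSet.ncard ≤ G.edgeSet.ncard + Z.edgeSet.ncard := by
  have hsplit := ncard_sdiff_add_ncard_of_subset (edgeSet_mono hC) hG
  have := ncard_union_le (G.edgeSet \ C.edgeSet) Z.edgeSet
  rw [edgeSet_sup, edgeSet_sdiff]
  omega

end EdgeSwap

namespace Walk

variable {G : SimpleGraph V} {u : V}

theorem IsTrail.ncard_edgeSet {v : V} {p : G.Walk u v} (hp : p.IsTrail) :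
    p.edgeSet.ncard = p.length := by
  classical
  have : p.edgeSet = ↑p.edges.toFinset := by ext; simp [mem_edgeSet]
  rw [this, ncard_coe_finset, List.toFinset_card_of_nodup hp.edges_nodup, length_edges]

def zigzagGraph (c : G.Walk u u) : SimpleGraph V :=
  pathAlong (c.getVert ∘ zigzag (c.length - 1)) (c.length - 1)

namespace IsCycle

variable {c : G.Walk u u} (hc : c.IsCycle)
include hc

theorem injOn_getVert_comp_zigzag :
    InjOn (c.getVert ∘ zigzag (c.length - 1)) (Iic (c.length - 1)) :=
  hc.getVert_injOn'.comp zigzag_injOn fun _ hj => zigzag_le (mem_Iic.1 hj)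

theorem ncard_edgeSet_zigzagGraph_lt : c.zigzagGraph.edgeSet.ncard < c.length := by
  have := hc.three_le_length
  exact ncard_edgeSet_pathAlong_le.trans_lt (by omega)

theorem ncard_neighborSet_zigzagGraph_le (w : V) :
    (c.zigzagGraph.neighborSet w).ncard ≤ (c.toSubgraph.neighborSet w).ncard := by
  by_cases hw : w ∈ c.support
  · rw [hc.ncard_neighborSet_toSubgraph_eq_two hw]
    exact ncard_neighborSet_pathAlong_le hc.injOn_getVert_comp_zigzag w
  · have : c.zigzagGraph.neighborSet w = ∅ := eq_empty_of_forall_notMem fun b hb => by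
      obtain ⟨j, -, rfl⟩ := exists_eq_of_pathAlong_adj hb
      exact hw (c.getVert_mem_support _)
    simp [this]

theorem square_zigzagGraph_adj_getVert_succ {i : ℕ} (hi : i < c.length) :
    c.zigzagGraph.square.Adj (c.getVert i) (c.getVert (i + 1)) := by
  have := hc.three_le_length
  have hσ := hc.injOn_getVert_comp_zigzag
  unfold zigzagGraph
  set ℓ := c.length - 1
  rcases Nat.lt_or_ge i ℓ with hi | hi
  · have key := square_pathAlong_adj hσ (zigzagIndex_le hi.le) (zigzagIndex_le hi)
      (fun h => by
        have := congrArg (zigzag ℓ) h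
        rw [zigzag_zigzagIndex hi.le, zigzag_zigzagIndex hi] at this
        omega)
      zigzagIndex_succ_le zigzagIndex_le_succ
    simpa [zigzag_zigzagIndex hi.le, zigzag_zigzagIndex hi] using key
  · -- the closing edge of the cycle joins the first two vertices of the zigzag
    obtain rfl : i = ℓ := by omega
    have key := square_pathAlong_adj hσ (j := 1) (j' := 0) (by omega) (by omega) one_ne_zero
      (by omega) (by omega)
    simpa [zigzag, show ℓ + 1 = c.length by omega] using key

theorem spanningCoe_toSubgraph_le_square_zigzagGraph :
    c.toSubgraph.spanningCoe ≤ c.zigzagGraph.square := by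
  intro a b hab
  obtain ⟨i, he, hi⟩ := c.toSubgraph_adj_iff.1 hab
  obtain ⟨rfl, rfl⟩ | ⟨rfl, rfl⟩ := Sym2.eq_iff.1 he
  exacts [hc.square_zigzagGraph_adj_getVert_succ hi,
    (hc.square_zigzagGraph_adj_getVert_succ hi).symm]

theorem exists_le_square [Finite V] :
    ∃ T : SimpleGraph V, G ≤ T.square ∧ T.edgeSet.ncard < G.edgeSet.ncard ∧
      ∀ w, (T.neighborSet w).ncard ≤ (G.neighborSet w).ncard := by
  have hC : c.toSubgraph.spanningCoe ≤ G := c.toSubgraph.spanningCoe_le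
  refine ⟨G \ c.toSubgraph.spanningCoe ⊔ c.zigzagGraph, fun a b hab => ?_, ?_, fun w => ?_⟩
  · by_cases hcab : c.toSubgraph.spanningCoe.Adj a b
    · exact square_mono le_sup_right (hc.spanningCoe_toSubgraph_le_square_zigzagGraph hcab)
    · exact le_square _ (le_sup_left (α := SimpleGraph V) ⟨hab, hcab⟩)
  · have := ncard_edgeSet_sdiff_sup_add_le (Z := c.zigzagGraph) hC (toFinite _)
    rw [Subgraph.edgeSet_spanningCoe, edgeSet_toSubgraph, hc.isTrail.ncard_edgeSet] at this
    have := hc.ncard_edgeSet_zigzagGraph_lt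
    omega
  · exact ncard_neighborSet_sdiff_sup_le hC (toFinite _) (hc.ncard_neighborSet_zigzagGraph_le w)

end IsCycle

end Walk

theorem degree_eq_ncard_neighborSet [Fintype V] (G : SimpleGraph V) [DecidableRel G.Adj]
    (w : V) : G.degree w = (G.neighborSet w).ncard := by
  rw [← card_neighborSet_eq_degree, ← Nat.card_coe_set_eq, Nat.card_eq_fintype_card]

end SimpleGraph

open SimpleGraph

open scoped Classical in
/-- For a connected unicyclic graph `H` (connected with exactly as many edges as
vertices) there is a tree `T` on the same vertex set with `Δ(T) ≤ Δ(H)` such that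
every edge of `H` is an edge of `T²` (i.e. joins vertices at distance at most 2 in `T`). -/
theorem unicyclic_in_tree_square {V : Type*} [Fintype V] (H : SimpleGraph V)
    (hconn : H.Connected) (huni : H.edgeSet.ncard = Fintype.card V) :
    ∃ T : SimpleGraph V, T.IsTree ∧ T.maxDegree ≤ H.maxDegree ∧
      ∀ a b : V, H.Adj a b → (T.Adj a b ∨ ∃ c : V, T.Adj a c ∧ T.Adj c b) := by
  obtain ⟨u, c, hc⟩ : ∃ u, ∃ c : H.Walk u u, c.IsCycle := by
    have hcyc : ¬H.IsAcyclic := fun hac => by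
      have := (isTree_iff_connected_and_card.1 ⟨hconn, hac⟩).2
      rw [Nat.card_coe_set_eq, huni, Nat.card_eq_fintype_card] at this
      omega
    simpa [IsAcyclic] using hcyc
  obtain ⟨T, hsq, hcard, hdeg⟩ := hc.exists_le_square
  have hT : T.Connected := hconn.of_le_square hsq
  refine ⟨T, isTree_iff_connected_and_card.2 ⟨hT, ?_⟩, ?_,
    fun a b hab => (square_adj.1 (hsq hab)).2⟩
  · have := hT.card_vert_le_card_edgeSet_add_one
    rw [Nat.card_coe_set_eq, Nat.card_eq_fintype_card] at this ⊢
    omega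
  · refine maxDegree_le_of_forall_degree_le _ _ fun w => ?_
    rw [degree_eq_ncard_neighborSet]
    exact (hdeg w).trans ((H.degree_eq_ncard_neighborSet w) ▸ H.degree_le_maxDegree w)
end

section
/- Let H be a simple graph with density m(H) ≥ 1, and let H^(b) be the multigraph obtained from H by replacing each edge with b parallel copies, for a positive integer b. Then the edge set of H^(b) can be partitioned into k = ⌈b·m(H)⌉ parts H₁, …, H_k such that for each i, every connected component of H_i is a simple graph containing at most one cycle. -/
/-!
A graph that can be oriented so that every vertex is the head of at most one edge has at most `|s|`
edges inside every vertex set `s`: the heads of those edges are distinct vertices of `s`.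
By Hall's theorem, the density bound `e(s) ≤ d·|s|` lets us orient the `b`-fold multigraph so that
every vertex is the head of at most `k = ⌈b·d⌉` edge copies. The copies then form a bipartite
multigraph between edges of `H` and head vertices, of maximum degree at most `k` (an edge of `H`
has degree `b ≤ b·d ≤ k`); by König's edge-colouring theorem it has a proper `k`-edge-colouring,
and each colour class is simple and has every vertex as head at most once.
König's theorem is reduced to the regular case, where one repeatedly removes a perfect matching
provided by Hall's theorem.
-/

/-- The number of edges of `G` spanned by a vertex set `s`. -/
noncomputable def edgeCountIn {V : Type*} (G : SimpleGraph V) (s : Set V) : ℕ :=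
  {e ∈ G.edgeSet | ∀ v ∈ e, v ∈ s}.ncard

open Finset Function

section BipartiteEdgeColoring

variable {A L R : Type*} [Fintype A] [DecidableEq L] [DecidableEq R] (l : A → L) (r : A → R)

theorem card_le_card_image_of_fiber_bounds {k : ℕ} (hk : 0 < k)
    (hl : ∀ x, k ≤ #{p | l p = x}) (hr : ∀ y, #{p | r p = y} ≤ k) (S : Finset L) :
    #S ≤ #(({p | l p ∈ S} : Finset A).image r) := by
  set E : Finset A := {p | l p ∈ S}
  have hlow : k * #S ≤ #E :=
    mul_card_image_le_card_of_maps_to (fun p hp => (mem_filter.1 hp).2) k fun x hx =>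
      (hl x).trans (card_le_card fun p hp => by simp_all)
  have hup : #E ≤ k * #(E.image r) :=
    card_le_mul_card_image E k fun y _ =>
      (card_le_card (filter_subset_filter _ (subset_univ E))).trans (hr y)
  exact Nat.le_of_mul_le_mul_left (hlow.trans hup) hk

theorem exists_perfect_matching_of_regular [Fintype L] [Fintype R] {k : ℕ} (hk : 0 < k)
    (hl : ∀ x, #{p | l p = x} = k) (hr : ∀ y, #{p | r p = y} = k) :
    ∃ M : Finset A, (∀ x, #{p ∈ M | l p = x} = 1) ∧ ∀ y, #{p ∈ M | r p = y} = 1 := by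
  classical
  have hall : ∀ S : Finset L, #S ≤ #(S.biUnion fun x => ({p | l p = x} : Finset A).image r) :=
    fun S => (card_le_card_image_of_fiber_bounds l r hk (fun x => (hl x).ge) (fun y => (hr y).le)
      S).trans (card_le_card fun y => by simp)
  obtain ⟨ρ, hρ, hρmem⟩ := (all_card_le_biUnion_card_iff_exists_injective _).1 hall
  choose e he using fun x => mem_image.1 (hρmem x)
  have hcard : Fintype.card L = Fintype.card R := by
    have hL := card_eq_sum_card_fiberwise (f := l) (s := univ) (t := univ) fun _ _ => mem_univ _
    have hR := card_eq_sum_card_fiberwise (f := r) (s := univ) (t := univ) fun _ _ => mem_univ _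
    simp only [hl, hr, sum_const, card_univ, smul_eq_mul] at hL hR
    exact Nat.eq_of_mul_eq_mul_right hk (hL.symm.trans hR)
  obtain ⟨σ, hσ⟩ := ((Fintype.bijective_iff_injective_and_card ρ).2 ⟨hρ, hcard⟩).2.hasRightInverse
  refine ⟨univ.image e, fun x => card_eq_one.2 ⟨e x, ?_⟩, fun y => card_eq_one.2 ⟨e (σ y), ?_⟩⟩
  · ext p
    simp only [mem_filter, mem_image, mem_univ, true_and, mem_singleton]
    constructor
    · rintro ⟨⟨x', rfl⟩, rfl⟩
      rw [(mem_filter.1 (he x').1).2]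
    · rintro rfl
      exact ⟨⟨x, rfl⟩, (mem_filter.1 (he x).1).2⟩
  · ext p
    simp only [mem_filter, mem_image, mem_univ, true_and, mem_singleton]
    constructor
    · rintro ⟨⟨x', rfl⟩, rfl⟩
      rw [(he x').2, hρ (hσ (ρ x'))]
    · rintro rfl
      exact ⟨⟨σ y, rfl⟩, (he _).2.trans (hσ y)⟩

end BipartiteEdgeColoring

section ExtendColoring

variable {A X : Type*} [DecidableEq A] [DecidableEq X]

theorem card_filter_subtype_notMem [Fintype A] (M : Finset A) (g : A → X) (x : X) :
    #{q : {p // p ∉ M} | g q = x} = #{p | g p = x} - #{p ∈ M | g p = x} := by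
  rw [← card_map (Embedding.subtype _),
    ← card_sdiff_of_subset (filter_subset_filter _ (subset_univ M))]
  congr 1
  ext p
  simp only [mem_map, mem_filter, mem_univ, true_and, Embedding.subtype_apply, Subtype.exists,
    exists_and_right, exists_eq_right, mem_sdiff]
  tauto

def extendByLast {k : ℕ} (M : Finset A) (f : {p // p ∉ M} → Fin k) (p : A) : Fin (k + 1) :=
  if h : p ∈ M then Fin.last k else (f ⟨p, h⟩).castSucc

theorem injective_extendByLast {k : ℕ} (M : Finset A) (g : A → X)
    (hM : ∀ x, #{p ∈ M | g p = x} ≤ 1) (f : {p // p ∉ M} → Fin k)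
    (hf : Injective fun q : {p // p ∉ M} => (g q, f q)) :
    Injective fun p => (g p, extendByLast M f p) := by
  intro p q hpq
  obtain ⟨hg, hc⟩ := Prod.mk.inj hpq
  simp only [extendByLast] at hc
  by_cases hp : p ∈ M <;> by_cases hq : q ∈ M <;> simp only [hp, hq, dite_true, dite_false] at hc
  · exact card_le_one.1 (hM (g q)) p (by simp [hp, hg]) q (by simp [hq])
  · exact absurd hc.symm (Fin.castSucc_ne_last _)
  · exact absurd hc (Fin.castSucc_ne_last _)
  · exact congrArg Subtype.val (@hf ⟨p, hp⟩ ⟨q, hq⟩ (Prod.ext hg (Fin.castSucc_injective _ hc)))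

end ExtendColoring

theorem exists_bipartite_edgeColoring_of_regular {A L R : Type*} [Fintype A] [Fintype L]
    [Fintype R] [DecidableEq L] [DecidableEq R] (l : A → L) (r : A → R) {k : ℕ}
    (hl : ∀ x, #{p | l p = x} = k) (hr : ∀ y, #{p | r p = y} = k) :
    ∃ f : A → Fin k, Injective (fun p => (l p, f p)) ∧ Injective (fun p => (r p, f p)) := by
  classical
  induction k generalizing A with
  | zero =>
    have : IsEmpty A := ⟨fun p => by
      simpa using (card_eq_zero.1 (hl (l p))).subset (mem_filter.2 ⟨mem_univ p, rfl⟩)⟩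
    exact ⟨isEmptyElim, fun p => isEmptyElim p, fun p => isEmptyElim p⟩
  | succ k ih =>
    obtain ⟨M, hMl, hMr⟩ := exists_perfect_matching_of_regular l r k.succ_pos hl hr
    obtain ⟨f, hfl, hfr⟩ := ih (fun q : {p // p ∉ M} => l q) (fun q => r q)
      (fun x => by rw [card_filter_subtype_notMem, hl, hMl]; rfl)
      (fun y => by rw [card_filter_subtype_notMem, hr, hMr]; rfl)
    exact ⟨extendByLast M f, injective_extendByLast M l (fun x => (hMl x).le) f hfl,
      injective_extendByLast M r (fun y => (hMr y).le) f hfr⟩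

theorem card_filter_sumElim {α β W : Type*} [Fintype α] [Fintype β] [DecidableEq W]
    (f : α → W) (g : β → W) (w : W) :
    #{p | Sum.elim f g p = w} = #{a | f a = w} + #{b | g b = w} := by
  simp only [card_filter, Fintype.sum_sum_type, Sum.elim_inl, Sum.elim_inr]
  rfl

theorem card_filter_sigma_fst {W : Type*} [Fintype W] [DecidableEq W] (n : W → ℕ) (w : W) :
    #{q : Σ w, Fin (n w) | q.1 = w} = n w := by
  rw [card_filter, Fintype.sum_sigma]
  simp [apply_ite card]

theorem exists_bipartite_edgeColoring {A L R : Type*} [Fintype A] [Fintype L] [Fintype R]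
    [DecidableEq L] [DecidableEq R] (l : A → L) (r : A → R) {k : ℕ}
    (hl : ∀ x, #{p | l p = x} ≤ k) (hr : ∀ y, #{p | r p = y} ≤ k) :
    ∃ f : A → Fin k, Injective (fun p => (l p, f p)) ∧ Injective (fun p => (r p, f p)) := by
  classical
  -- On the vertex set `L ⊕ R` (on both sides), take the graph `u → v` together with its mirror
  -- image `v → u`, and pad every vertex `w` with `k - deg w` edges `w → w`: this is `k`-regular.
  let u : A → L ⊕ R := Sum.inl ∘ l
  let v : A → L ⊕ R := Sum.inr ∘ r
  let deg (w : L ⊕ R) : ℕ := #{p | u p = w} + #{p | v p = w}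
  have hdeg : ∀ w, #{p | u p = w} + #{p | v p = w} ≤ k := by
    rintro (x | y)
    · simpa [u, v] using hl x
    · simpa [u, v] using hr y
  let left : A ⊕ A ⊕ (Σ w, Fin (k - deg w)) → L ⊕ R := Sum.elim u (Sum.elim v Sigma.fst)
  let right : A ⊕ A ⊕ (Σ w, Fin (k - deg w)) → L ⊕ R := Sum.elim v (Sum.elim u Sigma.fst)
  obtain ⟨F, hFl, hFr⟩ := exists_bipartite_edgeColoring_of_regular (k := k) left right
    (fun w => by
      simp only [left, deg, card_filter_sumElim, card_filter_sigma_fst]; have := hdeg w; omega)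
    (fun w => by
      simp only [right, deg, card_filter_sumElim, card_filter_sigma_fst]; have := hdeg w; omega)
  exact ⟨F ∘ Sum.inl, Injective.of_comp (f := Prod.map (Sum.inl : L → L ⊕ R) id)
    (hFl.comp Sum.inl_injective), Injective.of_comp (f := Prod.map (Sum.inr : R → L ⊕ R) id)
    (hFr.comp Sum.inl_injective)⟩

theorem card_filter_fst_eq_le {α β : Type*} [DecidableEq α] [Fintype β] (s : Finset (α × β))
    (a : α) : #{p ∈ s | p.1 = a} ≤ Fintype.card β :=
  (card_le_card_of_injOn Prod.snd (fun _ _ => mem_univ _) fun _ hp _ hq hpq =>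
    Prod.ext ((mem_filter.1 hp).2.trans (mem_filter.1 hq).2.symm) hpq).trans_eq card_univ

theorem exists_orientation_of_card_le {P V : Type*} [Fintype P] [Fintype V] [DecidableEq V]
    (e : P → Sym2 V) (k : ℕ) (h : ∀ F : Finset P, #F ≤ k * #{v | ∃ p ∈ F, v ∈ e p}) :
    ∃ o : P → V, (∀ p, o p ∈ e p) ∧ ∀ v, #{p | o p = v} ≤ k := by
  classical
  have hall : ∀ F : Finset P, #F ≤ #{q : V × Fin k | ∃ p ∈ F, q.1 ∈ e p} := fun F => by
    have : ({q : V × Fin k | ∃ p ∈ F, q.1 ∈ e p} : Finset _) =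
        ({v | ∃ p ∈ F, v ∈ e p} : Finset V) ×ˢ (univ : Finset (Fin k)) := by
      ext; simp
    rw [this, card_product, card_univ, Fintype.card_fin, mul_comm]
    exact h F
  obtain ⟨g, hg, hge⟩ := (Fintype.all_card_le_filter_rel_iff_exists_injective _).1 hall
  refine ⟨fun p => (g p).1, hge, fun v => ?_⟩
  calc #{p | (g p).1 = v} ≤ #(univ : Finset (Fin k)) :=
        card_le_card_of_injOn (fun p => (g p).2) (fun _ _ => mem_univ _) fun p hp q hq hpq =>
          hg (Prod.ext ((mem_filter.1 hp).2.trans (mem_filter.1 hq).2.symm) hpq)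
    _ = k := by simp

theorem card_le_edgeCountIn {V : Type*} [Finite V] (G : SimpleGraph V) (E : Finset G.edgeSet)
    (s : Set V) (hE : ∀ e ∈ E, ∀ v ∈ (e : Sym2 V), v ∈ s) : #E ≤ edgeCountIn G s := by
  classical
  rw [edgeCountIn, ← card_image_of_injective E Subtype.val_injective, ← Set.ncard_coe_finset]
  refine Set.ncard_le_ncard (fun x hx => ?_) (Set.toFinite _)
  obtain ⟨e, he, rfl⟩ := mem_image.1 hx
  exact ⟨e.2, hE e he⟩

theorem card_le_mul_card_vertices {V : Type*} [Fintype V] [DecidableEq V] (H : SimpleGraph V)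
    {d : ℚ} (hub : ∀ s : Set V, s.Nonempty → (edgeCountIn H s : ℚ) ≤ d * s.ncard) {b k : ℕ}
    (hk : b * d ≤ k) (F : Finset (H.edgeSet × Fin b)) :
    #F ≤ k * #{v | ∃ p ∈ F, v ∈ (p.1 : Sym2 V)} := by
  classical
  set W : Finset V := {v | ∃ p ∈ F, v ∈ (p.1 : Sym2 V)}
  rcases F.eq_empty_or_nonempty with rfl | ⟨p, hp⟩
  · simp
  have hW : (W : Set V).Nonempty :=
    ⟨(p.1 : Sym2 V).out.1, mem_filter.2 ⟨mem_univ _, p, hp, Sym2.out_fst_mem _⟩⟩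
  have hcopies : #F ≤ b * #(F.image Prod.fst) := card_le_mul_card_image F b fun e _ =>
    (card_filter_fst_eq_le F e).trans_eq (Fintype.card_fin b)
  have hedges : #(F.image Prod.fst) ≤ edgeCountIn H W :=
    card_le_edgeCountIn H _ _ fun e he v hv => by
      obtain ⟨p, hp, rfl⟩ := mem_image.1 he
      exact mem_filter.2 ⟨mem_univ _, p, hp, hv⟩
  have hdensity := hub W hW
  rw [Set.ncard_coe_finset] at hdensity
  have : (#F : ℚ) ≤ k * #W := calc
    (#F : ℚ) ≤ b * edgeCountIn H W := by
      exact_mod_cast hcopies.trans (Nat.mul_le_mul_left b hedges)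
    _ ≤ b * (d * #W) := by gcongr
    _ ≤ k * #W := by rw [← mul_assoc]; gcongr
  exact_mod_cast this

theorem ncard_image_le_ncard_of_injOn_head {P V : Type*} [Finite P] [Finite V] (e : P → Sym2 V)
    (o : P → V) (ho : ∀ p, o p ∈ e p) (T : Set P) (hT : Set.InjOn o T) (s : Set V) :
    (e '' {p ∈ T | ∀ v ∈ e p, v ∈ s}).ncard ≤ s.ncard :=
  (Set.ncard_image_le (Set.toFinite _)).trans <|
    Set.ncard_le_ncard_of_injOn o (fun p hp => hp.2 _ (ho p)) (hT.mono fun _ hp => hp.1)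
      (Set.toFinite s)

theorem matroid_decomposition_general {V : Type*} [Fintype V] (H : SimpleGraph V)
    (b : ℕ) (d : ℚ) (hd1 : 1 ≤ d)
    (hub : ∀ s : Set V, s.Nonempty → (edgeCountIn H s : ℚ) ≤ d * s.ncard) :
    ∃ f : H.edgeSet × Fin b → Fin ⌈(b : ℚ) * d⌉₊,
      (∀ (e : H.edgeSet) (c c' : Fin b), f (e, c) = f (e, c') → c = c') ∧
      (∀ (i : Fin ⌈(b : ℚ) * d⌉₊) (s : Set V), s.Nonempty →
        ({e : Sym2 V | (∃ p : H.edgeSet × Fin b, f p = i ∧ (p.1 : Sym2 V) = e) ∧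
            ∀ v ∈ e, v ∈ s}).ncard ≤ s.ncard) := by
  classical
  have hk : (b : ℚ) * d ≤ ⌈(b : ℚ) * d⌉₊ := Nat.le_ceil _
  have hbk : b ≤ ⌈(b : ℚ) * d⌉₊ := by
    exact_mod_cast (le_mul_of_one_le_right b.cast_nonneg hd1).trans hk
  obtain ⟨o, ho, hdeg⟩ := exists_orientation_of_card_le
    (fun p : H.edgeSet × Fin b => (p.1 : Sym2 V)) _ (card_le_mul_card_vertices H hub hk)
  obtain ⟨f, hf_edge, hf_head⟩ := exists_bipartite_edgeColoring Prod.fst o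
    (fun e => (card_filter_fst_eq_le univ e).trans (by simpa using hbk)) hdeg
  refine ⟨f, fun e c c' h => congrArg Prod.snd (@hf_edge (e, c) (e, c') (Prod.ext rfl h)),
    fun i s _ => ?_⟩
  convert ncard_image_le_ncard_of_injOn_head _ o ho {p | f p = i}
    (fun p hp q hq h => hf_head (Prod.ext h (hp.trans hq.symm))) s using 2
  ext x
  simp

/-- Matroid decomposition lemma: if `H` is a simple graph of density exactly `d ≥ 1`
(`d = m(H)`), then the multigraph `H^{(b)}` obtained by duplicating every edge `b` times
can be partitioned into `k = ⌈b·d⌉` parts (a part is a fiber of `f`), each of which is a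
simple graph all of whose connected components are unicyclic (equivalently, every vertex
set `s` spans at most `|s|` edges of the part). -/
theorem matroid_decomposition {V : Type*} [Fintype V] (H : SimpleGraph V)
    (b : ℕ) (hb : 0 < b) (d : ℚ) (hd1 : 1 ≤ d)
    (hub : ∀ s : Set V, s.Nonempty → (edgeCountIn H s : ℚ) ≤ d * s.ncard)
    (hmax : ∃ s : Set V, s.Nonempty ∧ (edgeCountIn H s : ℚ) = d * s.ncard) :
    ∃ f : H.edgeSet × Fin b → Fin ⌈(b : ℚ) * d⌉₊,
      (∀ (e : H.edgeSet) (c c' : Fin b), f (e, c) = f (e, c') → c = c') ∧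
      (∀ (i : Fin ⌈(b : ℚ) * d⌉₊) (s : Set V), s.Nonempty →
        ({e : Sym2 V | (∃ p : H.edgeSet × Fin b, f p = i ∧ (p.1 : Sym2 V) = e) ∧
            ∀ v ∈ e, v ∈ s}).ncard ≤ s.ncard) :=
  matroid_decomposition_general H b d hd1 hub
end

section
/- Let G be a connected multigraph whose underlying simple graph contains at least as many edges as vertices, let E be the edge set of G, and let B be the family of spanning subgraphs of G that are simple, connected, and unicyclic, taken as candidate bases. Then the pair (E, B) satisfies the basis exchange axiom: for any distinct X, Y ∈ B and any e ∈ X \ Y, there exists e' ∈ Y \ X such that (X \ {e}) ∪ {e'} ∈ B. -/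
/-- `Z` is a candidate basis: a spanning subgraph of the multigraph (edges `E`, endpoints
`ends`) that is simple (no two parallel edges), connected and unicyclic (being connected
and spanning with exactly `|V|` edges). -/
def IsUniBase {V E : Type*} [Fintype V] (ends : E → Sym2 V) (Z : Finset E) : Prop :=
  Z.card = Fintype.card V ∧ Set.InjOn ends ↑Z ∧
    (SimpleGraph.fromEdgeSet (ends '' ↑Z)).Connected

open SimpleGraph in
/-- If `u,v` are joined in `fromEdgeSet s` but not reachable in `G'`, some edge of `s`
has its two endpoints not reachable in `G'`. -/
lemma cross_lemma {V : Type*} (s : Set (Sym2 V)) (G' : SimpleGraph V) {u v : V}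
    (h : (SimpleGraph.fromEdgeSet s).Reachable u v) (hne : ¬ G'.Reachable u v) :
    ∃ a b : V, s(a, b) ∈ s ∧ a ≠ b ∧ ¬ G'.Reachable a b := by
  obtain ⟨w⟩ := h
  induction w with
  | nil => exact absurd (Reachable.refl _) hne
  | @cons x c _ h p ih =>
    by_cases hr : G'.Reachable x c
    · exact ih (fun hcv => hne (hr.trans hcv))
    · rw [SimpleGraph.fromEdgeSet_adj] at h
      exact ⟨x, c, h.1, h.2, hr⟩

open SimpleGraph in
/-- Deleting one edge from a graph: every vertex reachable to `x` is still reachable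
to `x` or to `y` after removing the edge `s(x,y)`. -/
lemma reach_del {V : Type*} (s : Set (Sym2 V)) (x y : V) {w : V}
    (h : (SimpleGraph.fromEdgeSet (insert s(x, y) s)).Reachable w x) :
    (SimpleGraph.fromEdgeSet s).Reachable w x ∨ (SimpleGraph.fromEdgeSet s).Reachable w y := by
  suffices H : ∀ (w z : V), (SimpleGraph.fromEdgeSet (insert s(x, y) s)).Walk w z →
      (SimpleGraph.fromEdgeSet s).Reachable w z ∨ (SimpleGraph.fromEdgeSet s).Reachable w x ∨
        (SimpleGraph.fromEdgeSet s).Reachable w y by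
    obtain ⟨p⟩ := h
    rcases H w x p with h1 | h1 | h1
    · exact Or.inl h1
    · exact Or.inl h1
    · exact Or.inr h1
  intro w z p
  induction p with
  | nil => exact Or.inl (Reachable.refl _)
  | @cons a c _ h p ih =>
    rw [SimpleGraph.fromEdgeSet_adj] at h
    rcases h.1 with heq | hmem
    · rcases Sym2.eq_iff.mp heq with ⟨rfl, rfl⟩ | ⟨rfl, rfl⟩
      · exact Or.inr (Or.inl (Reachable.refl _))
      · exact Or.inr (Or.inr (Reachable.refl _))
    · have hadj : (SimpleGraph.fromEdgeSet s).Adj a c :=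
        (SimpleGraph.fromEdgeSet_adj s).mpr ⟨hmem, h.2⟩
      rcases ih with h1 | h1 | h1
      · exact Or.inl (hadj.reachable.trans h1)
      · exact Or.inr (Or.inl (hadj.reachable.trans h1))
      · exact Or.inr (Or.inr (hadj.reachable.trans h1))

/-- The family of spanning connected simple unicyclic subgraphs of a connected loopless
multigraph, whose underlying simple graph has at least as many edges as vertices,
satisfies the basis exchange axiom. -/
theorem unicyclic_bases_exchange {V E : Type*} [Fintype V] [Fintype E] [DecidableEq E]
    (ends : E → Sym2 V) (hloop : ∀ e, ¬ (ends e).IsDiag)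
    (hconn : (SimpleGraph.fromEdgeSet (Set.range ends)).Connected)
    (hdense : Fintype.card V ≤ (Set.range ends).ncard) :
    ∀ X Y : Finset E, IsUniBase ends X → IsUniBase ends Y → X ≠ Y →
      ∀ e ∈ X, e ∉ Y →
        ∃ e' ∈ Y, e' ∉ X ∧ IsUniBase ends (insert e' (X.erase e)) := by
  classical
  intro X Y hX hY hXY e heX heY
  obtain ⟨hXcard, hXinj, hXconn⟩ := hX
  obtain ⟨hYcard, hYinj, hYconn⟩ := hY
  set s' : Set (Sym2 V) := ends '' ↑(X.erase e) with hs'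
  have hXerase : (X.erase e).card = X.card - 1 := Finset.card_erase_of_mem heX
  have hXpos : 1 ≤ X.card := Finset.card_pos.mpr ⟨e, heX⟩
  have hinj' : Set.InjOn ends ↑(X.erase e) :=
    hXinj.mono (by exact_mod_cast Finset.erase_subset e X)
  have hXcoe : (↑X : Set E) = insert e ↑(X.erase e) := by
    rw [← Finset.coe_insert, Finset.insert_erase heX]
  -- the IsUniBase conclusion, modulo the two interesting facts
  have mkBase : ∀ e' : E, e' ∈ Y → ends e' ∉ s' →
      (SimpleGraph.fromEdgeSet (insert (ends e') s')).Connected →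
      e' ∉ X ∧ IsUniBase ends (insert e' (X.erase e)) := by
    intro e' he'Y hnm hconn'
    have he'ne : e' ≠ e := fun h => heY (h ▸ he'Y)
    have he'nXe : e' ∉ X.erase e := fun h => hnm ⟨e', by exact_mod_cast h, rfl⟩
    have he'nX : e' ∉ X := fun h => he'nXe (Finset.mem_erase.mpr ⟨he'ne, h⟩)
    refine ⟨he'nX, ?_, ?_, ?_⟩
    · rw [Finset.card_insert_of_notMem he'nXe, hXerase]
      omega
    · rw [Finset.coe_insert]
      exact (Set.injOn_insert (by exact_mod_cast he'nXe)).mpr ⟨hinj', hnm⟩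
    · rwa [Finset.coe_insert, Set.image_insert_eq]
  by_cases hc : (SimpleGraph.fromEdgeSet s').Connected
  · -- `X.erase e` is still spanning connected; just pick a new non-parallel edge of `Y`
    have hcard1 : ((X.erase e).image ends).card < (Y.image ends).card := by
      have h1 : ((X.erase e).image ends).card ≤ (X.erase e).card := Finset.card_image_le
      have h2 : (Y.image ends).card = Y.card := Finset.card_image_of_injOn hYinj
      omega
    have hns : ¬ (Y.image ends ⊆ (X.erase e).image ends) :=
      fun hsub => absurd (Finset.card_le_card hsub) (by omega)
    obtain ⟨f, hfY, hfX⟩ := Finset.not_subset.mp hns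
    obtain ⟨e', he'Y, he'f⟩ := Finset.mem_image.mp hfY
    have hnm : ends e' ∉ s' := by
      rw [he'f]
      intro hm
      exact hfX (by rw [hs', ← Finset.coe_image] at hm; exact_mod_cast hm)
    obtain ⟨hx, hb⟩ := mkBase e' he'Y hnm
      ((hc.mono (SimpleGraph.fromEdgeSet_mono (Set.subset_insert _ _))))
    exact ⟨e', he'Y, hx, hb⟩
  · -- `X.erase e` has two components; pick an edge of `Y` crossing the cut
    have hxy : ∀ z : Sym2 V, ∃ x y : V, z = s(x, y) := Sym2.ind fun x y => ⟨x, y, rfl⟩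
    obtain ⟨x, y, hq⟩ := hxy (ends e)
    have hXim : ends '' ↑X = insert s(x, y) s' := by
      rw [hXcoe, Set.image_insert_eq, hq]
    haveI hne : Nonempty V := hXconn.nonempty
    -- get two non-reachable vertices
    have hnc : ∃ u v : V, ¬ (SimpleGraph.fromEdgeSet s').Reachable u v := by
      by_contra hcon
      push_neg at hcon
      exact hc ⟨fun u v => hcon u v⟩
    obtain ⟨u, v, huv⟩ := hnc
    obtain ⟨a, b, habY, hab, hnr⟩ :=
      cross_lemma (ends '' ↑Y) (SimpleGraph.fromEdgeSet s') (hYconn.preconnected u v) huv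
    obtain ⟨e', he'Y, he'ab⟩ := habY
    have he'Y' : e' ∈ Y := by exact_mod_cast he'Y
    have hnm : ends e' ∉ s' := by
      rw [he'ab]
      intro hm
      exact hnr ((SimpleGraph.fromEdgeSet_adj s').mpr ⟨hm, hab⟩).reachable
    -- connectivity of the new graph
    have hconn' : (SimpleGraph.fromEdgeSet (insert (ends e') s')).Connected := by
      rw [he'ab]
      set H := SimpleGraph.fromEdgeSet (insert s(a, b) s') with hH
      have hle : SimpleGraph.fromEdgeSet s' ≤ H :=
        SimpleGraph.fromEdgeSet_mono (Set.subset_insert _ _)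
      have habH : H.Adj a b := (SimpleGraph.fromEdgeSet_adj _).mpr ⟨Set.mem_insert _ _, hab⟩
      have hreach : ∀ w : V, (SimpleGraph.fromEdgeSet s').Reachable w x ∨
          (SimpleGraph.fromEdgeSet s').Reachable w y := by
        intro w
        apply reach_del s' x y
        have := hXconn.preconnected w x
        rwa [hXim] at this
      have hkey : H.Reachable x y := by
        rcases hreach a with ha | ha <;> rcases hreach b with hb | hb
        · exact absurd (ha.trans hb.symm) hnr
        · exact ((ha.mono hle).symm.trans habH.reachable).trans (hb.mono hle)
        · exact ((hb.mono hle).symm.trans habH.symm.reachable).trans (ha.mono hle)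
        · exact absurd (ha.trans hb.symm) hnr
      have hwx : ∀ w : V, H.Reachable w x := by
        intro w
        rcases hreach w with h1 | h1
        · exact h1.mono hle
        · exact (h1.mono hle).trans hkey.symm
      exact ⟨fun w w' => (hwx w).trans (hwx w').symm⟩
    obtain ⟨hx, hb⟩ := mkBase e' he'Y' hnm hconn'
    exact ⟨e', he'Y', hx, hb⟩
end

section
/- If a graph H has acyclic chromatic number at most k, then every nonempty subset U of its vertices spans at most (k−1)(|U|−1) edges. -/
open Finset SimpleGraph

section

variable {V W : Type*}

lemma SimpleGraph.IsAcyclic.natCard_edgeSet_le [Finite V] {G : SimpleGraph V}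
    (hG : G.IsAcyclic) : Nat.card G.edgeSet ≤ Nat.card V - 1 := by
  cases isEmpty_or_nonempty V
  · simp
  obtain ⟨T, hGT, -, hT⟩ := connected_top.exists_isTree_le_of_le_of_isAcyclic le_top hG
  have hT_card := (isTree_iff_connected_and_card.mp hT).2
  have := Nat.card_mono (Set.toFinite T.edgeSet) (edgeSet_mono hGT)
  omega

lemma natCard_edgeSet_induce (G : SimpleGraph V) (s : Set V) :
    Nat.card (G.induce s).edgeSet = edgeCountIn G s := by
  rw [edgeCountIn, Nat.card_coe_set_eq,
    ← Set.ncard_image_of_injective _ (Sym2.map.injective Subtype.val_injective)]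
  congr 1
  ext e
  constructor
  · rintro ⟨e', he', rfl⟩
    induction e' using Sym2.ind with
    | _ a b => simpa using he'
  · induction e using Sym2.ind with
    | _ a b =>
      rintro ⟨hab, hs⟩
      exact ⟨s(⟨a, hs a (Sym2.mem_mk_left a b)⟩, ⟨b, hs b (Sym2.mem_mk_right a b)⟩), hab, rfl⟩

lemma edgeCountIn_le_card_sub_one_of_isAcyclic (G : SimpleGraph V) (s : Finset V)
    (hs : (G.induce (s : Set V)).IsAcyclic) : edgeCountIn G s ≤ #s - 1 := by
  simpa [← natCard_edgeSet_induce] using hs.natCard_edgeSet_le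

lemma edgeCountIn_le_sum_edgeCountIn_filter_mem [Finite V] [DecidableEq W] {G : SimpleGraph V}
    {K : SimpleGraph W} [Fintype K.edgeSet] (f : G →g K) (s : Finset V) :
    edgeCountIn G s ≤ ∑ e ∈ K.edgeFinset, edgeCountIn G ↑{v ∈ s | f v ∈ e} := by
  refine (Set.ncard_le_ncard ?_ (Set.toFinite _)).trans (K.edgeFinset.set_ncard_biUnion_le _)
  rintro x ⟨hx, hxs⟩
  refine Set.mem_biUnion (x := Sym2.map f x) (by simpa using f.map_mem_edgeSet hx) ⟨hx, ?_⟩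
  intro v hv
  exact mem_coe.2 (mem_filter.2 ⟨hxs v hv, Sym2.mem_map.2 ⟨v, hv, rfl⟩⟩)

section Degree

variable [Fintype W] [DecidableEq W] (K : SimpleGraph W) [DecidableRel K.Adj] (f : V → W)

lemma sum_card_filter_mem_edgeFinset (s : Finset V) :
    ∑ e ∈ K.edgeFinset, #{v ∈ s | f v ∈ e} = ∑ v ∈ s, K.degree (f v) := by
  simp_rw [card_filter]
  rw [sum_comm]
  refine sum_congr rfl fun v _ => ?_
  rw [← card_filter, ← incidenceFinset_eq_filter, card_incidenceFinset_eq_degree]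

/-- The `- 1` is truncated; it is exact on the edges at `f u`, whose fibres contain `u`. -/
lemma sum_card_filter_mem_sub_one_add_degree_le {s : Finset V} {u : V} (hu : u ∈ s) :
    ∑ e ∈ K.edgeFinset, (#{v ∈ s | f v ∈ e} - 1) + K.degree (f u) ≤
      ∑ v ∈ s, K.degree (f v) := by
  rw [← sum_singleton (fun v => K.degree (f v)) u, ← sum_card_filter_mem_edgeFinset,
    ← sum_card_filter_mem_edgeFinset, ← sum_add_distrib]
  refine sum_le_sum fun e _ => ?_
  have h_le : #{v ∈ {u} | f v ∈ e} ≤ #{v ∈ s | f v ∈ e} :=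
    card_le_card (filter_subset_filter _ (singleton_subset_iff.2 hu))
  have h_le_one : #{v ∈ {u} | f v ∈ e} ≤ 1 := card_filter_le _ _
  omega

end Degree

end

/-- If `H` has acyclic chromatic number at most `k` (a proper coloring with `k` colors
in which any two color classes induce a forest), then every nonempty vertex set `U`
spans at most `(k-1)(|U|-1)` edges. -/
theorem acyclic_chromatic_density {V : Type*} [Fintype V] (H : SimpleGraph V) (k : ℕ)
    (c : V → Fin k) (hproper : ∀ a b : V, H.Adj a b → c a ≠ c b)
    (hacyc : ∀ i j : Fin k, (H.induce {v : V | c v = i ∨ c v = j}).IsAcyclic) :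
    ∀ U : Set V, U.Nonempty → edgeCountIn H U ≤ (k - 1) * (U.ncard - 1) := by
  classical
  rintro U ⟨u, hu⟩
  lift U to Finset V using U.toFinite
  have hfiber : ∀ e ∈ (⊤ : SimpleGraph (Fin k)).edgeFinset,
      edgeCountIn H ↑{v ∈ U | c v ∈ e} ≤ #{v ∈ U | c v ∈ e} - 1 := by
    intro e _
    induction e using Sym2.ind with
    | _ i j =>
      refine edgeCountIn_le_card_sub_one_of_isAcyclic H _
        ((hacyc i j).embedding (induceHomOfLE H fun v hv => ?_))
      simpa using (mem_filter.1 hv).2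
  have hsum := sum_card_filter_mem_sub_one_add_degree_le ⊤ c hu
  simp only [complete_graph_degree, Fintype.card_fin, sum_const, smul_eq_mul] at hsum
  rw [Set.ncard_coe_finset]
  calc edgeCountIn H U
      ≤ ∑ e ∈ (⊤ : SimpleGraph (Fin k)).edgeFinset, edgeCountIn H ↑{v ∈ U | c v ∈ e} :=
        edgeCountIn_le_sum_edgeCountIn_filter_mem (Coloring.mk c (hproper _ _)) U
    _ ≤ ∑ e ∈ (⊤ : SimpleGraph (Fin k)).edgeFinset, (#{v ∈ U | c v ∈ e} - 1) := sum_le_sum hfiber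
    _ ≤ (k - 1) * (#U - 1) := by
        rw [Nat.mul_sub_one, mul_comm]
        omega
end

section
/- Let M, n, k be positive integers with k ≤ M. Then the number of labelled n-vertex subgraphs of a graph with M edges that use exactly k edges is at most C(M, k)·n!, and if C(M, k)·n! ≤ (n/(3s))^{k} for some s with k = n·e/v where a balanced graph F has v vertices, e edges and s = v, then there is a lift of F not contained in G. -/
/-- `H` is a lift of `F`: all edges of `H` lie above edges of `F`, and above every
edge of `F` the edges of `H` form a perfect matching between the two fibers. -/
def IsLift {α : Type*} (F : SimpleGraph α) {p : ℕ} (H : SimpleGraph (α × Fin p)) : Prop :=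
  (∀ (a b : α) (x y : Fin p), H.Adj (a, x) (b, y) → F.Adj a b) ∧
  (∀ a b : α, F.Adj a b → ∀ x : Fin p, ∃! y : Fin p, H.Adj (a, x) (b, y)) ∧
  (∀ a b : α, F.Adj a b → ∀ y : Fin p, ∃! x : Fin p, H.Adj (a, x) (b, y))

/-!
A copy of a `k`-edge graph `H` on `n` labelled vertices inside `G` is determined by its image, a
`k`-edge subgraph of `G`, together with an injection of the image's vertices into the labels;
hence there are at most `C(M, k) · n!` such `H`. On the other hand, after orienting the edges of
`F`, every choice of one permutation of `Fin p` per edge gives a different lift of `F`, so there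
are at least `(p!)^e(F)` lifts, each with `k = p · e(F)` edges. Since `(p/3)^p < p!`, the
hypothesis `C(M, k) · n! ≤ (n/(3 v(F)))^k = (p/3)^k` leaves too few copies in `G` for all lifts.
-/

open Function Nat Equiv SimpleGraph

theorem Nat.descFactorial_le_factorial (n k : ℕ) : n.descFactorial k ≤ n ! := by
  rcases le_or_gt k n with h | h
  · exact factorial_mul_descFactorial h ▸ Nat.le_mul_of_pos_left _ (factorial_pos _)
  · exact descFactorial_eq_zero_iff_lt.2 h ▸ Nat.zero_le _

theorem div_three_pow_lt_factorial {p : ℕ} (hp : p ≠ 0) : ((p : ℝ) / 3) ^ p < p ! := by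
  have hexp : (p : ℝ) ^ p / p ! ≤ Real.exp p := Real.pow_div_factorial_le_exp _ p.cast_nonneg p
  have h3 : Real.exp p < 3 ^ p := by
    rw [← Real.exp_one_pow]
    exact pow_lt_pow_left₀ (Real.exp_one_lt_d9.trans (by norm_num)) (Real.exp_pos 1).le hp
  rw [div_pow, div_lt_iff₀ (by positivity)]
  rw [div_le_iff₀ (by positivity)] at hexp
  nlinarith [show (0 : ℝ) < (p ! : ℝ) by positivity]

namespace SimpleGraph

variable {U W : Type*}

theorem isContained_iff_exists_injective_adj {H : SimpleGraph U} {G : SimpleGraph W} :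
    H ⊑ G ↔ ∃ f : U → W, Injective f ∧ ∀ a b, H.Adj a b → G.Adj (f a) (f b) :=
  ⟨fun ⟨f⟩ => ⟨f, f.injective, fun _ _ => f.toHom.map_adj⟩,
    fun ⟨f, hf, hadj⟩ => ⟨⟨⟨f, hadj _ _⟩, hf⟩⟩⟩

noncomputable def supportInv (f : U ↪ W) (H : SimpleGraph U) : (H.map f).support ↪ U :=
  (Set.embeddingOfSubset _ _ fun _ hw => by
      obtain ⟨a, -, rfl⟩ := (support_map f H).subset hw
      exact ⟨a, rfl⟩).trans (Equiv.ofInjective f f.injective).symm.toEmbedding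

theorem apply_supportInv (f : U ↪ W) (H : SimpleGraph U) (w : (H.map f).support) :
    f (supportInv f H w) = w :=
  Equiv.apply_ofInjective_symm f.injective _

theorem map_supportInv_induce_support (f : U ↪ W) (H : SimpleGraph U) :
    ((H.map f).induce (H.map f).support).map (supportInv f H) = H := by
  have hinv : ∀ {a : U} {w : (H.map f).support}, f a = w → supportInv f H w = a := fun h =>
    f.injective ((apply_supportInv f H _).trans h.symm)
  ext a b
  simp only [map_adj, comap_adj, Embedding.coe_subtype]
  constructor
  · rintro ⟨u, v, ⟨a', b', hadj, hu, hv⟩, rfl, rfl⟩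
    rwa [hinv hu, hinv hv]
  · intro hadj
    have hmap : (H.map f).Adj (f a) (f b) := map_adj_apply.2 hadj
    exact ⟨⟨f a, f b, hmap⟩, ⟨f b, f a, hmap.symm⟩, ⟨a, b, hadj, rfl, rfl⟩,
      hinv rfl, hinv rfl⟩

theorem card_subgraphs_le_choose [Finite W] (G : SimpleGraph W) (k : ℕ) :
    Nat.card {K : SimpleGraph W // K ≤ G ∧ K.edgeSet.ncard = k}
      ≤ G.edgeSet.ncard.choose k := by
  classical
  have := Fintype.ofFinite W
  calc Nat.card {K : SimpleGraph W // K ≤ G ∧ K.edgeSet.ncard = k}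
      ≤ Nat.card (G.edgeFinset.powersetCard k) :=
        Nat.card_le_card_of_injective
          (fun K => ⟨K.1.edgeFinset, Finset.mem_powersetCard.2
            ⟨edgeFinset_subset_edgeFinset.2 K.2.1, by
              rw [edgeFinset, ← Set.ncard_eq_toFinset_card', K.2.2]⟩⟩)
          fun K₁ K₂ h => Subtype.ext (edgeFinset_inj.1 (congrArg Subtype.val h))
    _ = G.edgeSet.ncard.choose k := by
        rw [Nat.card_eq_fintype_card, Fintype.card_coe, Finset.card_powersetCard,
          Set.ncard_eq_toFinset_card']
        rfl

theorem card_labelledCopies_le [Fintype U] [Fintype W] (G : SimpleGraph W) (k : ℕ) :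
    Nat.card {H : SimpleGraph U // H.edgeSet.ncard = k ∧ H ⊑ G}
      ≤ G.edgeSet.ncard.choose k * (Fintype.card U)! := by
  classical
  let Image := {K : SimpleGraph W // K ≤ G ∧ K.edgeSet.ncard = k}
  let Code := Σ K : Image, K.1.support ↪ U
  let encode : {H : SimpleGraph U // H.edgeSet.ncard = k ∧ H ⊑ G} → Code := fun H =>
    let f := H.2.2.some.toEmbedding
    ⟨⟨H.1.map f, (map_le_iff_le_comap f _ _).2 fun _ _ => H.2.2.some.toHom.map_adj,
      by rw [edgeSet_map, Set.ncard_image_of_injective _ f.sym2Map.injective, H.2.1]⟩,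
      supportInv f H.1⟩
  let decode : Code → SimpleGraph U := fun x => (x.1.1.induce x.1.1.support).map x.2
  have hencode : Injective encode := fun H₁ H₂ h => Subtype.ext <| by
    rw [← map_supportInv_induce_support _ H₁.1, ← map_supportInv_induce_support _ H₂.1]
    exact congrArg decode h
  calc Nat.card {H : SimpleGraph U // H.edgeSet.ncard = k ∧ H ⊑ G}
      ≤ Nat.card Code := Nat.card_le_card_of_injective encode hencode
    _ = ∑ K : Image, Nat.card (K.1.support ↪ U) := Nat.card_sigma
    _ ≤ ∑ _K : Image, (Fintype.card U)! := Finset.sum_le_sum fun K _ => by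
        rw [Nat.card_eq_fintype_card, Fintype.card_embedding_eq]
        exact Nat.descFactorial_le_factorial _ _
    _ ≤ G.edgeSet.ncard.choose k * (Fintype.card U)! := by
        rw [Finset.sum_const, Finset.card_univ, smul_eq_mul, ← Nat.card_eq_fintype_card]
        exact Nat.mul_le_mul_right _ (card_subgraphs_le_choose G k)

end SimpleGraph

namespace IsLift

variable {α : Type*} {F : SimpleGraph α} {p : ℕ} {H : SimpleGraph (α × Fin p)}

theorem of_existsUnique (h_proj : ∀ a b x y, H.Adj (a, x) (b, y) → F.Adj a b)
    (h_match : ∀ a b, F.Adj a b → ∀ x, ∃! y, H.Adj (a, x) (b, y)) : IsLift F H :=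
  ⟨h_proj, h_match, fun a b hab y => by
    simpa only [H.adj_comm (a, _)] using h_match b a hab.symm y⟩

theorem degree_eq [Fintype α] [DecidableRel F.Adj] [DecidableRel H.Adj] (h : IsLift F H)
    (a : α) (x : Fin p) : H.degree (a, x) = F.degree a := by
  rw [← card_neighborFinset_eq_degree, ← card_neighborFinset_eq_degree]
  refine Finset.card_bij (fun v _ => v.1) (fun v hv => ?_)
    (fun v hv w hw hvw => ?_) fun b hb => ?_
  · simp only [mem_neighborFinset] at hv ⊢
    exact h.1 _ _ _ _ hv
  · obtain ⟨b, y⟩ := v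
    obtain ⟨c, z⟩ := w
    obtain rfl : b = c := hvw
    simp only [mem_neighborFinset] at hv hw
    obtain ⟨_, -, huniq⟩ := h.2.1 a b (h.1 _ _ _ _ hv) x
    rw [huniq y hv, huniq z hw]
  · rw [mem_neighborFinset] at hb
    obtain ⟨y, hy, -⟩ := h.2.1 a b hb x
    exact ⟨(b, y), (mem_neighborFinset _ _ _).2 hy, rfl⟩

theorem ncard_edgeSet [Finite α] (h : IsLift F H) :
    H.edgeSet.ncard = p * F.edgeSet.ncard := by
  classical
  have := Fintype.ofFinite α
  have hsum := H.sum_degrees_eq_twice_card_edges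
  rw [Fintype.sum_prod_type] at hsum
  simp only [h.degree_eq, Finset.sum_const, Finset.card_univ, Fintype.card_fin, smul_eq_mul] at hsum
  rw [← Finset.mul_sum, F.sum_degrees_eq_twice_card_edges] at hsum
  rw [Set.ncard_eq_toFinset_card', Set.ncard_eq_toFinset_card']
  change H.edgeFinset.card = p * F.edgeFinset.card
  lia

end IsLift

namespace SimpleGraph

section LinearOrder

variable {α : Type*} [LinearOrder α] (F : SimpleGraph α) {p : ℕ}

abbrev OrientedEdge := {q : α × α // F.Adj q.1 q.2 ∧ q.1 < q.2}

theorem card_orientedEdge : Nat.card F.OrientedEdge = F.edgeSet.ncard := by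
  rw [← Nat.card_coe_set_eq]
  refine Nat.card_eq_of_bijective (fun q => ⟨s(q.1.1, q.1.2), q.2.1⟩) ⟨?_, ?_⟩
  · rintro ⟨⟨a, b⟩, _, hab⟩ ⟨⟨c, d⟩, _, hcd⟩ h
    rcases Sym2.eq_iff.1 (congrArg Subtype.val h) with ⟨rfl, rfl⟩ | ⟨rfl, rfl⟩
    · rfl
    · exact absurd hab hcd.not_gt
  · rintro ⟨e, he⟩
    induction e using Sym2.ind with
    | _ a b =>
      rcases (F.ne_of_adj he).lt_or_gt with hab | hba
      · exact ⟨⟨(a, b), he, hab⟩, rfl⟩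
      · exact ⟨⟨(b, a), he.symm, hba⟩, Subtype.ext Sym2.eq_swap⟩

variable {F}

def liftOf (π : F.OrientedEdge → Perm (Fin p)) : SimpleGraph (α × Fin p) :=
  fromRel fun u w => ∃ h : F.Adj u.1 w.1 ∧ u.1 < w.1, π ⟨(u.1, w.1), h⟩ u.2 = w.2

theorem liftOf_adj_of_lt (π : F.OrientedEdge → Perm (Fin p)) {a b : α} (hab : F.Adj a b)
    (hlt : a < b) (x y : Fin p) :
    (liftOf π).Adj (a, x) (b, y) ↔ π ⟨(a, b), hab, hlt⟩ x = y := by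
  simp only [liftOf, fromRel_adj]
  constructor
  · rintro ⟨-, ⟨_, h⟩ | ⟨⟨_, hba⟩, -⟩⟩
    · exact h
    · exact absurd hlt hba.not_gt
  · intro h
    exact ⟨fun he => hlt.ne (congrArg Prod.fst he), Or.inl ⟨⟨hab, hlt⟩, h⟩⟩

theorem isLift_liftOf (π : F.OrientedEdge → Perm (Fin p)) : IsLift F (liftOf π) := by
  refine .of_existsUnique (fun a b x y h => ?_) fun a b hab x => ?_
  · rcases ((fromRel_adj _ _ _).1 h).2 with ⟨⟨h, -⟩, -⟩ | ⟨⟨h, -⟩, -⟩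
    exacts [h, h.symm]
  · rcases (F.ne_of_adj hab).lt_or_gt with hlt | hgt
    · simpa only [liftOf_adj_of_lt π hab hlt] using existsUnique_eq'
    · simpa only [adj_comm _ (a, x), liftOf_adj_of_lt π hab.symm hgt]
        using (π _).bijective.existsUnique x

theorem liftOf_injective : Injective (liftOf (F := F) (p := p)) := by
  intro π₁ π₂ h
  funext ⟨⟨a, b⟩, hab, hlt⟩
  ext x
  have hadj := (liftOf_adj_of_lt π₁ hab hlt x _).2 rfl
  rw [h, liftOf_adj_of_lt π₂ hab hlt] at hadj
  exact congrArg Fin.val hadj.symm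

end LinearOrder

theorem factorial_pow_le_card_lifts {α : Type*} [Fintype α] (F : SimpleGraph α) (p : ℕ) :
    p ! ^ F.edgeSet.ncard ≤ Nat.card {H : SimpleGraph (α × Fin p) // IsLift F H} := by
  let _ : LinearOrder α := .lift' _ (Fintype.equivFin α).injective
  calc p ! ^ F.edgeSet.ncard = Nat.card (F.OrientedEdge → Perm (Fin p)) := by
        rw [Nat.card_fun, card_orientedEdge, Nat.card_perm, Nat.card_fin]
    _ ≤ _ := Nat.card_le_card_of_injective (fun π => ⟨liftOf π, isLift_liftOf π⟩)
        fun _ _ h => liftOf_injective (congrArg Subtype.val h)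

end SimpleGraph

theorem counting_missing_lift_general {W : Type*} [Fintype W] (G : SimpleGraph W)
    (M n k : ℕ) (hM : G.edgeSet.ncard = M) (hk : 0 < k) :
    (∀ (U : Type) [Fintype U], Fintype.card U = n →
      Nat.card {H : SimpleGraph U // H.edgeSet.ncard = k ∧
          ∃ f : U → W, Function.Injective f ∧
            ∀ a b : U, H.Adj a b → G.Adj (f a) (f b)}
        ≤ M.choose k * n.factorial) ∧
    (∀ (α : Type) [Fintype α] (F : SimpleGraph α) (p : ℕ), 0 < p →
      (∀ s : Set α, s.Nonempty →
        (edgeCountIn F s : ℚ) * Fintype.card α ≤ (F.edgeSet.ncard : ℚ) * s.ncard) →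
      Fintype.card α ≤ F.edgeSet.ncard →
      n = Fintype.card α * p →
      k = n * F.edgeSet.ncard / Fintype.card α →
      ((M.choose k * n.factorial : ℝ) ≤ ((n : ℝ) / (3 * Fintype.card α)) ^ k) →
      ∃ H : SimpleGraph (α × Fin p), IsLift F H ∧
        ¬ ∃ f : α × Fin p → W, Function.Injective f ∧
          ∀ a b : α × Fin p, H.Adj a b → G.Adj (f a) (f b)) := by
  simp only [← isContained_iff_exists_injective_adj]
  refine ⟨fun U _ hU => hM ▸ hU ▸ card_labelledCopies_le G k, ?_⟩
  intro α _ F p hp _ _ hn hk_def hbound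
  have hv : Fintype.card α ≠ 0 := fun hv => by
    rw [hn, hv, zero_mul, zero_mul, Nat.zero_div] at hk_def
    exact hk.ne' hk_def
  have hk_eq : k = p * F.edgeSet.ncard := by
    rw [hk_def, hn, mul_assoc, Nat.mul_div_cancel_left _ (Nat.pos_of_ne_zero hv)]
  have he : F.edgeSet.ncard ≠ 0 := fun he => hk.ne' (by rw [hk_eq, he, mul_zero])
  by_contra! hall
  have hcount : p ! ^ F.edgeSet.ncard ≤ M.choose k * n ! :=
    calc p ! ^ F.edgeSet.ncard ≤ Nat.card {H : SimpleGraph (α × Fin p) // IsLift F H} :=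
          factorial_pow_le_card_lifts F p
      _ ≤ Nat.card {H : SimpleGraph (α × Fin p) // H.edgeSet.ncard = k ∧ H ⊑ G} :=
          Nat.card_le_card_of_injective
            (fun H => ⟨H.1, by rw [H.2.ncard_edgeSet, hk_eq], hall H.1 H.2⟩)
            fun _ _ h => Subtype.ext (congrArg Subtype.val h :)
      _ ≤ M.choose k * n ! := by
          simpa only [hM, hn, Fintype.card_prod, Fintype.card_fin]
            using card_labelledCopies_le (U := α × Fin p) G k
  have hratio : (n : ℝ) / (3 * Fintype.card α) = p / 3 := by
    rw [hn]
    push_cast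
    field_simp
  have hlt : ((p : ℝ) / 3) ^ k < p ! ^ F.edgeSet.ncard := by
    rw [hk_eq, pow_mul]
    exact pow_lt_pow_left₀ (div_three_pow_lt_factorial hp.ne') (by positivity) he
  rw [hratio] at hbound
  exact (hbound.trans_lt hlt).not_ge (by exact_mod_cast hcount)

/-- Counting step of the lower bound: a graph `G` with `M` edges contains at most
`C(M,k)·n!` labelled `n`-vertex subgraphs with exactly `k` edges; hence if
`C(M,k)·n! ≤ (n/(3 v(F)))^k` where `k = n·e(F)/v(F)` for a balanced graph `F`
(of density at least 1), then some lift of `F` of order `n` is not a subgraph of `G`. -/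
theorem counting_missing_lift {W : Type*} [Fintype W] (G : SimpleGraph W)
    (M n k : ℕ) (hM : G.edgeSet.ncard = M) (hk : 0 < k) (hkM : k ≤ M) :
    (∀ (U : Type) [Fintype U], Fintype.card U = n →
      Nat.card {H : SimpleGraph U // H.edgeSet.ncard = k ∧
          ∃ f : U → W, Function.Injective f ∧
            ∀ a b : U, H.Adj a b → G.Adj (f a) (f b)}
        ≤ M.choose k * n.factorial) ∧
    (∀ (α : Type) [Fintype α] (F : SimpleGraph α) (p : ℕ), 0 < p →
      (∀ s : Set α, s.Nonempty →
        (edgeCountIn F s : ℚ) * Fintype.card α ≤ (F.edgeSet.ncard : ℚ) * s.ncard) →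
      Fintype.card α ≤ F.edgeSet.ncard →
      n = Fintype.card α * p →
      k = n * F.edgeSet.ncard / Fintype.card α →
      ((M.choose k * n.factorial : ℝ) ≤ ((n : ℝ) / (3 * Fintype.card α)) ^ k) →
      ∃ H : SimpleGraph (α × Fin p), IsLift F H ∧
        ¬ ∃ f : α × Fin p → W, Function.Injective f ∧
          ∀ a b : α × Fin p, H.Adj a b → G.Adj (f a) (f b)) :=
  counting_missing_lift_general G M n k hM hk
end

section
/- Let B = (V₁ ∪ V₂, E) be a bipartite graph and a, t positive integers. If |N_B(X)| ≥ 2t|X| for every X ⊆ V₁ with 1 ≤ |X| ≤ 2a, then B is (t, ta)-nonblocking: there exists a family S of subsets of E containing ∅, closed under taking subsets, and such that for every E' ∈ S with |E'| < ta and every v ∈ V₁ incident to fewer than t edges of E', there is an edge e = (v, w) ∈ E \ E' with E' ∪ {e} ∈ S and w not incident to any edge of E'. -/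
/-!
Call a set `E'` of edges safe if it is a matching (no two edges share a right endpoint) and
every `X ⊆ V₁` with `|X| ≤ 2a` has capacity at least `t|X|`, where the capacity of `X`
counts the neighbours of `X` not yet used by `E'` plus the edges of `E'` at `X`. The empty
state is safe by expansion, and deleting an edge `(u, w)` with `u ∈ X` frees `w ∈ N(X)`, so
safe states are closed under subsets.

To extend a safe state `E'` with `|E'| < ta` at a vertex `v` of degree `< t`, call `X` tight
if its capacity is at most `t|X|`. Expansion forces tight sets with `|X| ≤ 2a` to have fewer
than `a` vertices, and since capacity is submodular the tight sets avoiding `v` are closed under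
union; let `U` be the largest one. Because `U ∪ {v}` is not tight, `v` has a free neighbour
`w` outside `N(U)`, and adding `(v, w)` lowers the capacity only of sets `X ∌ v` with
`w ∈ N(X)`; these are not tight, so the new state is still safe.
-/

namespace Set

variable {α : Type*}

lemma ncard_sdiff_le_ncard_sdiff_insert_add_one [Finite α] (s u : Set α) (x : α) :
    (s \ u).ncard ≤ (s \ insert x u).ncard + 1 :=
  calc _ ≤ (insert x (s \ insert x u)).ncard := by
        rw [insert_sdiff_insert]
        exact ncard_le_ncard (subset_insert _ _)
    _ ≤ _ := ncard_insert_le _ _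

lemma ncard_sep_le_ncard_sep_insert [Finite α] (s : Set α) (P : α → Prop) (x : α) :
    {y ∈ s | P y}.ncard ≤ {y ∈ insert x s | P y}.ncard :=
  ncard_le_ncard fun _ hy => ⟨mem_insert_of_mem _ hy.1, hy.2⟩

end Set

namespace Nonblocking

variable {V₁ V₂ : Type*} (Adj : V₁ → V₂ → Prop)

def nbhd (X : Set V₁) : Set V₂ := {w | ∃ v ∈ X, Adj v w}

noncomputable def capacity (E' : Set (V₁ × V₂)) (X : Set V₁) : ℕ :=
  (nbhd Adj X \ Prod.snd '' E').ncard + {p ∈ E' | p.1 ∈ X}.ncard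

variable {Adj}

lemma nbhd_mono {X Y : Set V₁} (h : X ⊆ Y) : nbhd Adj X ⊆ nbhd Adj Y :=
  fun _ ⟨v, hv, hadj⟩ => ⟨v, h hv, hadj⟩

lemma nbhd_union (X Y : Set V₁) : nbhd Adj (X ∪ Y) = nbhd Adj X ∪ nbhd Adj Y := by
  ext w
  simp only [nbhd, Set.mem_ofPred_eq, Set.mem_union, or_and_right, exists_or]

lemma capacity_empty (X : Set V₁) : capacity Adj ∅ X = (nbhd Adj X).ncard := by
  simp [capacity]

lemma capacity_eq_ncard_nbhd_sdiff [Finite V₁] [Finite V₂] {E' : Set (V₁ × V₂)}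
    (hadj : ∀ p ∈ E', Adj p.1 p.2) (hinj : Set.InjOn Prod.snd E') (X : Set V₁) :
    capacity Adj E' X = (nbhd Adj X \ Prod.snd '' {p ∈ E' | p.1 ∉ X}).ncard := by
  set F := {p ∈ E' | p.1 ∈ X}
  have hsplit : Prod.snd '' E' = Prod.snd '' {p ∈ E' | p.1 ∉ X} ∪ Prod.snd '' F := by
    rw [← Set.image_union]
    congr 1
    ext p
    simp only [F, Set.mem_union, Set.mem_ofPred_eq]
    tauto
  have hF : Prod.snd '' F ⊆ nbhd Adj X \ Prod.snd '' {p ∈ E' | p.1 ∉ X} := by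
    rintro _ ⟨p, ⟨hpE, hpX⟩, rfl⟩
    refine ⟨⟨p.1, hpX, hadj p hpE⟩, ?_⟩
    rintro ⟨q, ⟨hqE, hqX⟩, hqp⟩
    exact hqX (hinj hqE hpE hqp ▸ hpX)
  rw [capacity, ← (hinj.mono fun p hp => hp.1).ncard_image, ← Set.ncard_union_eq,
    hsplit, ← Set.sdiff_sdiff, Set.sdiff_union_of_subset hF]
  exact Set.disjoint_sdiff_left.mono_right (Set.image_mono fun p hp => hp.1)

lemma capacity_union_add_capacity_inter_le [Finite V₁] [Finite V₂] (E' : Set (V₁ × V₂))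
    (X Y : Set V₁) :
    capacity Adj E' (X ∪ Y) + capacity Adj E' (X ∩ Y) ≤
      capacity Adj E' X + capacity Adj E' Y := by
  simp only [capacity]
  set W := Prod.snd '' E'
  have hfree : (nbhd Adj (X ∪ Y) \ W).ncard + (nbhd Adj (X ∩ Y) \ W).ncard ≤
      (nbhd Adj X \ W).ncard + (nbhd Adj Y \ W).ncard := by
    have hinter : nbhd Adj (X ∩ Y) \ W ⊆ (nbhd Adj X \ W) ∩ (nbhd Adj Y \ W) := fun w hw =>
      ⟨⟨nbhd_mono Set.inter_subset_left hw.1, hw.2⟩, ⟨nbhd_mono Set.inter_subset_right hw.1, hw.2⟩⟩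
    calc _ ≤ ((nbhd Adj X \ W) ∪ (nbhd Adj Y \ W)).ncard +
          ((nbhd Adj X \ W) ∩ (nbhd Adj Y \ W)).ncard := by
          rw [nbhd_union, Set.union_sdiff_distrib]
          exact Nat.add_le_add_left (Set.ncard_le_ncard hinter) _
      _ = _ := Set.ncard_union_add_ncard_inter _ _
  have hedges : {p ∈ E' | p.1 ∈ X ∪ Y}.ncard + {p ∈ E' | p.1 ∈ X ∩ Y}.ncard =
      {p ∈ E' | p.1 ∈ X}.ncard + {p ∈ E' | p.1 ∈ Y}.ncard := by
    simp only [Set.mem_union, Set.mem_inter_iff, Set.sep_or, Set.sep_and]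
    exact Set.ncard_union_add_ncard_inter _ _
  omega

lemma capacity_insert_le_of_subset {E' : Set (V₁ × V₂)} {U : Set V₁} {v : V₁}
    (hv : nbhd Adj {v} \ Prod.snd '' E' ⊆ nbhd Adj U) :
    capacity Adj E' (insert v U) ≤ capacity Adj E' U + {p ∈ E' | p.1 = v}.ncard := by
  have hfree : nbhd Adj (insert v U) \ Prod.snd '' E' = nbhd Adj U \ Prod.snd '' E' := by
    have hvU : nbhd Adj {v} \ Prod.snd '' E' ⊆ nbhd Adj U \ Prod.snd '' E' :=
      fun w hw => ⟨hv hw, hw.2⟩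
    rw [Set.insert_eq, nbhd_union, Set.union_sdiff_distrib, Set.union_eq_right.2 hvU]
  have hedges : {p ∈ E' | p.1 ∈ insert v U} = {p ∈ E' | p.1 ∈ U} ∪ {p ∈ E' | p.1 = v} := by
    ext p
    simp only [Set.mem_ofPred_eq, Set.mem_insert_iff, Set.mem_union]
    tauto
  rw [capacity, capacity, hfree, hedges, add_assoc]
  gcongr
  exact Set.ncard_union_le _ _

lemma capacity_le_capacity_of_subset [Finite V₁] [Finite V₂] {E' E'' : Set (V₁ × V₂)}
    (hadj : ∀ p ∈ E', Adj p.1 p.2) (hinj : Set.InjOn Prod.snd E') (hsub : E'' ⊆ E')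
    (X : Set V₁) : capacity Adj E' X ≤ capacity Adj E'' X := by
  rw [capacity_eq_ncard_nbhd_sdiff hadj hinj,
    capacity_eq_ncard_nbhd_sdiff (fun p hp => hadj p (hsub hp)) (hinj.mono hsub)]
  exact Set.ncard_le_ncard <|
    Set.sdiff_subset_sdiff_right (Set.image_mono fun p hp => ⟨hsub hp.1, hp.2⟩)

lemma capacity_le_capacity_insert_add_one [Finite V₁] [Finite V₂] (E' : Set (V₁ × V₂))
    (e : V₁ × V₂) (X : Set V₁) : capacity Adj E' X ≤ capacity Adj (insert e E') X + 1 := by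
  have hfree := Set.ncard_sdiff_le_ncard_sdiff_insert_add_one (nbhd Adj X) (Prod.snd '' E') e.2
  have hedges := Set.ncard_sep_le_ncard_sep_insert E' (·.1 ∈ X) e
  rw [capacity, capacity, Set.image_insert_eq]
  omega

lemma capacity_le_capacity_insert_of_notMem_nbhd [Finite V₁] [Finite V₂]
    (E' : Set (V₁ × V₂)) {e : V₁ × V₂} {X : Set V₁} (he : e.2 ∉ nbhd Adj X) :
    capacity Adj E' X ≤ capacity Adj (insert e E') X := by
  rw [capacity, capacity, Set.image_insert_eq, Set.sdiff_insert_of_notMem he]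
  exact Nat.add_le_add_left (Set.ncard_sep_le_ncard_sep_insert E' (·.1 ∈ X) e) _

lemma capacity_le_capacity_insert_of_fst_mem [Finite V₁] [Finite V₂] {E' : Set (V₁ × V₂)}
    {e : V₁ × V₂} {X : Set V₁} (heE : e ∉ E') (heX : e.1 ∈ X) :
    capacity Adj E' X ≤ capacity Adj (insert e E') X := by
  have hfree := Set.ncard_sdiff_le_ncard_sdiff_insert_add_one (nbhd Adj X) (Prod.snd '' E') e.2
  have hedges : {p ∈ E' | p.1 ∈ X}.ncard + 1 ≤ {p ∈ insert e E' | p.1 ∈ X}.ncard := by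
    rw [← Set.ncard_insert_of_notMem fun he => heE he.1]
    refine Set.ncard_le_ncard ?_
    rintro p (rfl | ⟨hp, hpX⟩)
    exacts [⟨Set.mem_insert _ _, heX⟩, ⟨Set.mem_insert_of_mem _ hp, hpX⟩]
  rw [capacity, capacity, Set.image_insert_eq]
  omega

lemma ncard_lt_of_capacity_le [Finite V₁] [Finite V₂] {E' : Set (V₁ × V₂)} {X : Set V₁}
    {a t : ℕ} (hX : 2 * t * X.ncard ≤ (nbhd Adj X).ncard) (hE : E'.ncard < t * a)
    (htight : capacity Adj E' X ≤ t * X.ncard) : X.ncard < a := by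
  have hfree := Set.ncard_le_ncard_sdiff_add_ncard (nbhd Adj X) (Prod.snd '' E')
  have hW : (Prod.snd '' E').ncard ≤ E'.ncard := Set.ncard_image_le
  rw [capacity] at htight
  exact Nat.lt_of_mul_lt_mul_left (a := t) (by linarith)

variable (Adj) in
structure IsSafe (a t : ℕ) (E' : Set (V₁ × V₂)) : Prop where
  adj : ∀ p ∈ E', Adj p.1 p.2
  injOn : Set.InjOn Prod.snd E'
  le_capacity : ∀ X : Set V₁, X.ncard ≤ 2 * a → t * X.ncard ≤ capacity Adj E' X

variable {a t : ℕ} {E' : Set (V₁ × V₂)}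

lemma isSafe_empty
    (hexp : ∀ X : Set V₁, X.ncard ≤ 2 * a → 2 * t * X.ncard ≤ (nbhd Adj X).ncard) :
    IsSafe Adj a t ∅ where
  adj := by simp
  injOn := Set.injOn_empty _
  le_capacity X hX := by
    rw [capacity_empty]
    linarith [hexp X hX]

lemma IsSafe.mono [Finite V₁] [Finite V₂] (h : IsSafe Adj a t E') {E'' : Set (V₁ × V₂)}
    (hsub : E'' ⊆ E') : IsSafe Adj a t E'' where
  adj p hp := h.adj p (hsub hp)
  injOn := h.injOn.mono hsub
  le_capacity X hX :=
    (h.le_capacity X hX).trans (capacity_le_capacity_of_subset h.adj h.injOn hsub X)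

lemma IsSafe.capacity_union_le [Finite V₁] [Finite V₂] (h : IsSafe Adj a t E')
    {X Y : Set V₁} (hX : X.ncard ≤ 2 * a) (hXt : capacity Adj E' X ≤ t * X.ncard)
    (hYt : capacity Adj E' Y ≤ t * Y.ncard) :
    capacity Adj E' (X ∪ Y) ≤ t * (X ∪ Y).ncard := by
  have hsubmod := capacity_union_add_capacity_inter_le (Adj := Adj) E' X Y
  have hinter := h.le_capacity (X ∩ Y) ((Set.ncard_le_ncard Set.inter_subset_left).trans hX)
  have hcard := congrArg (t * ·) (Set.ncard_union_add_ncard_inter X Y)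
  simp only [mul_add] at hcard
  omega

lemma IsSafe.exists_greatest_tight [Finite V₁] [Finite V₂] (h : IsSafe Adj a t E')
    (hexp : ∀ X : Set V₁, X.ncard ≤ 2 * a → 2 * t * X.ncard ≤ (nbhd Adj X).ncard)
    (hE : E'.ncard < t * a) (v : V₁) :
    ∃ U : Set V₁, v ∉ U ∧ U.ncard < a ∧ capacity Adj E' U ≤ t * U.ncard ∧
      ∀ X : Set V₁, v ∉ X → X.ncard ≤ 2 * a → capacity Adj E' X ≤ t * X.ncard → X ⊆ U := by
  set P : Set V₁ → Prop := fun X => v ∉ X ∧ X.ncard ≤ 2 * a ∧ capacity Adj E' X ≤ t * X.ncard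
  have hsmall : ∀ X, P X → X.ncard < a := fun X hX =>
    ncard_lt_of_capacity_le (hexp X hX.2.1) hE hX.2.2
  obtain ⟨U, -, hU⟩ := Finite.exists_le_maximal (p := P) (a := ∅) ⟨Set.notMem_empty v, by simp,
    by simp [capacity, nbhd]⟩
  refine ⟨U, hU.1.1, hsmall U hU.1, hU.1.2.2, fun X hvX hX hXt => ?_⟩
  have hXU : P (X ∪ U) := by
    refine ⟨fun hv => hv.elim hvX hU.1.1, (Set.ncard_union_le X U).trans ?_,
      h.capacity_union_le hX hXt hU.1.2.2⟩
    have := hsmall X ⟨hvX, hX, hXt⟩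
    have := hsmall U hU.1
    omega
  exact Set.subset_union_left.trans (hU.2 hXU Set.subset_union_right)

lemma IsSafe.exists_free_adj_notMem_nbhd [Finite V₁] (h : IsSafe Adj a t E') {U : Set V₁}
    {v : V₁} (hvU : v ∉ U) (hU : (insert v U).ncard ≤ 2 * a)
    (hUt : capacity Adj E' U ≤ t * U.ncard) (hv : {p ∈ E' | p.1 = v}.ncard < t) :
    ∃ w, Adj v w ∧ w ∉ Prod.snd '' E' ∧ w ∉ nbhd Adj U := by
  by_contra! hcon
  have hsub : nbhd Adj {v} \ Prod.snd '' E' ⊆ nbhd Adj U := by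
    rintro w ⟨⟨u, rfl, hadj⟩, hw⟩
    exact hcon w hadj hw
  have hins := (h.le_capacity _ hU).trans (capacity_insert_le_of_subset hsub)
  rw [Set.ncard_insert_of_notMem hvU] at hins
  linarith

lemma IsSafe.insert [Finite V₁] [Finite V₂] (h : IsSafe Adj a t E') {v : V₁} {w : V₂}
    (hvw : Adj v w) (hw : w ∉ Prod.snd '' E')
    (htight : ∀ X : Set V₁, v ∉ X → X.ncard ≤ 2 * a → capacity Adj E' X ≤ t * X.ncard →
      w ∉ nbhd Adj X) :
    IsSafe Adj a t (insert (v, w) E') where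
  adj := by
    rintro p (rfl | hp)
    exacts [hvw, h.adj p hp]
  injOn := (Set.injOn_insert fun he => hw ⟨_, he, rfl⟩).2 ⟨h.injOn, hw⟩
  le_capacity X hX := by
    by_cases hvX : v ∈ X
    · exact (h.le_capacity X hX).trans
        (capacity_le_capacity_insert_of_fst_mem (fun he => hw ⟨_, he, rfl⟩) hvX)
    by_cases hXt : capacity Adj E' X ≤ t * X.ncard
    · exact (h.le_capacity X hX).trans
        (capacity_le_capacity_insert_of_notMem_nbhd E' (htight X hvX hX hXt))
    · have := capacity_le_capacity_insert_add_one (Adj := Adj) E' (v, w) X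
      omega

end Nonblocking

theorem feldman_friedman_pippenger_general {V₁ V₂ : Type*} [Fintype V₁] [Fintype V₂]
    (Adj : V₁ → V₂ → Prop) (a t : ℕ)
    (hexp : ∀ X : Set V₁, X.Nonempty → X.ncard ≤ 2 * a →
      2 * t * X.ncard ≤ ({w : V₂ | ∃ v ∈ X, Adj v w}).ncard) :
    ∃ S : Set (Set (V₁ × V₂)),
      (∀ E' ∈ S, ∀ p ∈ E', Adj (Prod.fst p) (Prod.snd p)) ∧
      (∅ : Set (V₁ × V₂)) ∈ S ∧
      (∀ E' ∈ S, ∀ E'' ⊆ E', E'' ∈ S) ∧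
      (∀ E' ∈ S, E'.ncard < t * a → ∀ v : V₁,
        ({p ∈ E' | Prod.fst p = v}).ncard < t →
        ∃ w : V₂, Adj v w ∧ (v, w) ∉ E' ∧ E' ∪ {(v, w)} ∈ S ∧
          ∀ p ∈ E', Prod.snd p ≠ w) := by
  have hexp' : ∀ X : Set V₁, X.ncard ≤ 2 * a →
      2 * t * X.ncard ≤ (Nonblocking.nbhd Adj X).ncard := by
    intro X hX
    rcases X.eq_empty_or_nonempty with rfl | hne
    · simp
    · exact hexp X hne hX
  refine ⟨{E' | Nonblocking.IsSafe Adj a t E'}, fun E' h => h.adj, Nonblocking.isSafe_empty hexp',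
    fun E' h E'' hsub => h.mono hsub, ?_⟩
  intro E' hE' hcard v hv
  obtain ⟨U, hvU, hUa, hUt, hUmax⟩ := hE'.exists_greatest_tight hexp' hcard v
  obtain ⟨w, hvw, hwW, hwU⟩ := hE'.exists_free_adj_notMem_nbhd hvU
    (by rw [Set.ncard_insert_of_notMem hvU]; omega) hUt hv
  refine ⟨w, hvw, fun h => hwW ⟨_, h, rfl⟩, ?_, fun p hp hpw => hwW ⟨p, hp, hpw⟩⟩
  rw [Set.union_singleton]
  exact hE'.insert hvw hwW fun X hvX hX hXt hwX =>
    hwU (Nonblocking.nbhd_mono (hUmax X hvX hX hXt) hwX)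

/-- Feldman–Friedman–Pippenger: if in a bipartite graph `B = (V₁ ∪ V₂, E)` (given by the
adjacency relation `Adj`) every set `X ⊆ V₁` with `1 ≤ |X| ≤ 2a` satisfies
`|N_B(X)| ≥ 2t|X|`, then `B` is `(t, ta)`-nonblocking: there is a family `S` of subsets
of `E` (the safe states) containing `∅`, closed under subsets, such that any safe state
`E'` with `|E'| < ta` can be extended at any vertex `v ∈ V₁` of `E'`-degree `< t` by an
edge `(v, w)` whose endpoint `w` is not used by `E'`, staying safe. -/
theorem feldman_friedman_pippenger {V₁ V₂ : Type*} [Fintype V₁] [Fintype V₂]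
    (Adj : V₁ → V₂ → Prop) (a t : ℕ) (ha : 0 < a) (ht : 0 < t)
    (hexp : ∀ X : Set V₁, X.Nonempty → X.ncard ≤ 2 * a →
      2 * t * X.ncard ≤ ({w : V₂ | ∃ v ∈ X, Adj v w}).ncard) :
    ∃ S : Set (Set (V₁ × V₂)),
      (∀ E' ∈ S, ∀ p ∈ E', Adj (Prod.fst p) (Prod.snd p)) ∧
      (∅ : Set (V₁ × V₂)) ∈ S ∧
      (∀ E' ∈ S, ∀ E'' ⊆ E', E'' ∈ S) ∧
      (∀ E' ∈ S, E'.ncard < t * a → ∀ v : V₁,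
        ({p ∈ E' | Prod.fst p = v}).ncard < t →
        ∃ w : V₂, Adj v w ∧ (v, w) ∉ E' ∧ E' ∪ {(v, w)} ∈ S ∧
          ∀ p ∈ E', Prod.snd p ≠ w) :=
  feldman_friedman_pippenger_general Adj a t hexp
end

section
/- Let T be a tree rooted at r and U ⊆ V(T) \ {r} a set of vertices such that any two vertices of U ∪ {r} are at distance at least 2L in T, where L ≥ 1. Order U as u₁, …, u_k so that vertices closer to r come earlier, and for each i let x_i be the first vertex on the path from u_i to r lying on ⋃_{j<i} P_j (with P₁ the path from r to u₁ and x₁ = r), and let P_i be the path from x_i to u_i. Then each path P_i has length at least L. -/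
/-- Path decomposition step of the random-walk embedding lemma. In a tree `T` rooted at
`r`, let `u₁, …, u_k` be vertices (distinct from `r`, pairwise and from `r` at distance
at least `2L`) ordered so that vertices closer to `r` come first. Suppose `xᵢ` lies on
the path from `r` to `uᵢ`, with `x₁ = r` and, for `i > 1`, `xᵢ` lying on the path
`P_j` from `x_j` to `u_j` for some `j < i` (membership in a path is expressed via the
tree metric). Then each path `Pᵢ` from `xᵢ` to `uᵢ` has length at least `L`. -/
theorem tree_path_decomposition {V : Type*} [Fintype V] (T : SimpleGraph V)
    (hT : T.IsTree) (r : V) (L k : ℕ) (hL : 1 ≤ L)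
    (u : Fin k → V) (hinj : Function.Injective u) (hur : ∀ i, u i ≠ r)
    (hdist : ∀ i j : Fin k, i ≠ j → 2 * L ≤ T.dist (u i) (u j))
    (hdistr : ∀ i : Fin k, 2 * L ≤ T.dist r (u i))
    (hmono : ∀ i j : Fin k, i ≤ j → T.dist r (u i) ≤ T.dist r (u j))
    (x : Fin k → V)
    (hx0 : ∀ i : Fin k, (i : ℕ) = 0 → x i = r)
    (hxpath : ∀ i : Fin k, T.dist r (x i) + T.dist (x i) (u i) = T.dist r (u i))
    (hxprev : ∀ i : Fin k, (i : ℕ) ≠ 0 → ∃ j : Fin k, j < i ∧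
      T.dist (x j) (x i) + T.dist (x i) (u j) = T.dist (x j) (u j)) :
    ∀ i : Fin k, L ≤ T.dist (x i) (u i) := by
  intro i
  have hconn : T.Connected := hT.isConnected
  rcases Nat.eq_zero_or_pos (i : ℕ) with h0 | hpos
  · rw [hx0 i h0]
    have := hdistr i
    omega
  · obtain ⟨j, hji, e3⟩ := hxprev i (by omega)
    have e1 := hxpath i
    have e2 := hxpath j
    have tri1 : T.dist r (x i) ≤ T.dist r (x j) + T.dist (x j) (x i) :=
      hconn.dist_triangle
    have tri2 : T.dist r (u j) ≤ T.dist r (x i) + T.dist (x i) (u j) :=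
      hconn.dist_triangle
    have tri3 : T.dist (u i) (u j) ≤ T.dist (u i) (x i) + T.dist (x i) (u j) :=
      hconn.dist_triangle
    rw [SimpleGraph.dist_comm (u := u i) (v := x i)] at tri3
    have hm := hmono j i (le_of_lt hji)
    have hd := hdist i j (by exact fun h => absurd h.symm (ne_of_lt hji))
    rw [SimpleGraph.dist_comm (u := u i) (v := u j)] at tri3
    have hcomm : T.dist (u i) (u j) = T.dist (u j) (u i) := SimpleGraph.dist_comm
    omega
end
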